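/- arXiv:2506.01075 — 6 statements merged into one kernel-verified Lean document; each statement's English description precedes it below -/
import Mathlib

section
/- Let D be a Bayesian network distribution on {0,1}^n with induced basis functions φ_S. Then for any two distinct subsets S ≠ T of [n], E_{X∼D}[φ_S(X) φ_T(X)] = 0. Consequently the 2^n functions {φ_S : S ⊆ [n]} form an orthonormal family with respect to the inner product ⟨f,g⟩ = E_{X∼D}[f(X)g(X)]. -/
/-!
A Bayesian network (BN) distribution on {0,1}^n: a DAG on [n] (encoded by parent
sets together with a rank function witnessing acyclicity) and, for each node `v`,
a conditional probability `cond v x ∈ (0,1)` of `X_v = 1` given the parent values,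
depending only on the coordinates in `pa v`.  The joint distribution is
`prob x = ∏ v, P(x_v | x_{pa v})`, and the BN-induced basis functions are
`φ_v(x) = (x_v − μ_{v,x_pa(v)})/σ_{v,x_pa(v)}`, `φ_S = ∏_{v∈S} φ_v`.
-/

open Finset

noncomputable section

/-- Interpret a Boolean as a real number (`true ↦ 1`, `false ↦ 0`). -/
def b2r (b : Bool) : ℝ := if b then 1 else 0

/-- A Bayesian network distribution on `{0,1}^n`. -/
structure BayesNet (n : ℕ) where
  /-- parent set of each node -/
  pa : Fin n → Finset (Fin n)
  /-- the parent relation is acyclic (a DAG) -/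
  acyclic : ∃ rank : Fin n → ℕ, ∀ v u, u ∈ pa v → rank u < rank v
  /-- `cond v x = P(X_v = 1 | X_{pa v} = x_{pa v})` -/
  cond : Fin n → (Fin n → Bool) → ℝ
  /-- the conditional probability of `v` depends only on the parents of `v` -/
  cond_local : ∀ v x y, (∀ u ∈ pa v, x u = y u) → cond v x = cond v y
  cond_pos : ∀ v x, 0 < cond v x
  cond_lt_one : ∀ v x, cond v x < 1

namespace BayesNet

variable {n : ℕ}

/-- The joint probability mass function `D(x) = ∏_v P(x_v | x_{pa v})`. -/
def prob (B : BayesNet n) (x : Fin n → Bool) : ℝ :=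
  ∏ v, if x v then B.cond v x else 1 - B.cond v x

/-- Conditional standard deviation `σ_{v, x_{pa v}}`. -/
def sigma (B : BayesNet n) (v : Fin n) (x : Fin n → Bool) : ℝ :=
  Real.sqrt (B.cond v x * (1 - B.cond v x))

/-- BN-induced basis function of a single node. -/
def phi (B : BayesNet n) (v : Fin n) (x : Fin n → Bool) : ℝ :=
  (b2r (x v) - B.cond v x) / B.sigma v x

/-- BN-induced basis function `φ_S = ∏_{v ∈ S} φ_v` (with `φ_∅ ≡ 1`). -/
def phiS (B : BayesNet n) (S : Finset (Fin n)) (x : Fin n → Bool) : ℝ :=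
  ∏ v ∈ S, B.phi v x

/-- Expectation with respect to the BN distribution. -/
def expect (B : BayesNet n) (g : (Fin n → Bool) → ℝ) : ℝ :=
  ∑ x, B.prob x * g x

/-- Fourier coefficient `f̂_S = E_D[f(X) φ_S(X)]`. -/
def coeff (B : BayesNet n) (f : (Fin n → Bool) → ℝ) (S : Finset (Fin n)) : ℝ :=
  B.expect fun x => f x * B.phiS S x

/-- Conditional expectation `E[g(X) | X_u = y_u for all u ∈ A]`. -/
def condExp (B : BayesNet n) (g : (Fin n → Bool) → ℝ) (A : Finset (Fin n))
    (y : Fin n → Bool) : ℝ :=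
  (∑ x ∈ univ.filter (fun x : Fin n → Bool => ∀ u ∈ A, x u = y u), B.prob x * g x) /
  (∑ x ∈ univ.filter (fun x : Fin n → Bool => ∀ u ∈ A, x u = y u), B.prob x)

/-- The union of the parent sets of the nodes of `S`. -/
def paS (B : BayesNet n) (S : Finset (Fin n)) : Finset (Fin n) := S.biUnion B.pa

/-- Spectral norm `L1(f) = Σ_S |f̂_S|`. -/
def L1 (B : BayesNet n) (f : (Fin n → Bool) → ℝ) : ℝ :=
  ∑ S : Finset (Fin n), |B.coeff f S|

end BayesNet

/-!
Order the nodes by a rank witnessing acyclicity and sum out a node `v` of maximal rank. No factor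
other than `v`'s own depends on `x v`, and summing that factor over the two values of `x v`
computes the moments `E[1] = 1`, `E[φ_v] = 0`, `E[φ_v²] = 1` of a standardized Bernoulli variable.
So `v` contributes `0` when it lies in exactly one of `S`, `T` and `1` otherwise, and induction over
the set of nodes whose factors are kept gives `E[φ_S φ_T] = [S = T]`.
-/

section FlipAt

variable {ι : Type*} [DecidableEq ι]

def flipAt (v : ι) (x : ι → Bool) : ι → Bool := Function.update x v (!x v)

lemma flipAt_involutive (v : ι) : Function.Involutive (flipAt v) := by
  intro x
  simp [flipAt]

lemma sum_mul_eq_of_add_flipAt [Fintype ι] {v : ι} (a g : (ι → Bool) → ℝ) (c : ℝ)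
    (ha : ∀ x, a x + a (flipAt v x) = c) (hg : ∀ x, g (flipAt v x) = g x) :
    ∑ x, a x * g x = c / 2 * ∑ x, g x := by
  have hswap : ∑ x, a (flipAt v x) * g x = ∑ x, a x * g x := by
    rw [← (flipAt_involutive v).bijective.sum_comp (fun x => a x * g x)]
    simp only [hg]
  have hpair : ∑ x, (a x + a (flipAt v x)) * g x = c * ∑ x, g x := by
    simp only [ha, mul_sum]
  simp only [add_mul, sum_add_distrib] at hpair
  linarith

end FlipAt

lemma bernoulli_standardized_sq {μ : ℝ} (h0 : 0 < μ) (h1 : μ < 1) :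
    μ * ((1 - μ) / √(μ * (1 - μ))) ^ 2 + (1 - μ) * (-μ / √(μ * (1 - μ))) ^ 2 = 1 := by
  have hvar : 0 < μ * (1 - μ) := mul_pos h0 (by linarith)
  have h1' : 1 - μ ≠ 0 := by linarith
  rw [div_pow, div_pow, Real.sq_sqrt hvar.le]
  field_simp
  ring

theorem Finset.eq_of_mem_iff_of_erase_eq {α : Type*} [DecidableEq α] {S T : Finset α} {v : α}
    (hv : v ∈ S ↔ v ∈ T) (he : S.erase v = T.erase v) : S = T := by
  ext w
  by_cases hw : w = v
  · exact hw ▸ hv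
  · simpa [hw] using congrArg (w ∈ ·) he

namespace BayesNet

variable {n : ℕ} (B : BayesNet n)

/-- The factor `P(X_v = x_v | X_{pa v} = x_{pa v})` of the joint probability `B.prob x`. -/
def condProb (v : Fin n) (x : Fin n → Bool) : ℝ :=
  if x v then B.cond v x else 1 - B.cond v x

section Flip

variable {B} {u v : Fin n}

lemma cond_flipAt (hv : v ∉ B.pa u) (x : Fin n → Bool) :
    B.cond u (flipAt v x) = B.cond u x :=
  B.cond_local u _ _ fun w hw => Function.update_of_ne (by rintro rfl; exact hv hw) _ _

lemma sigma_flipAt (hv : v ∉ B.pa u) (x : Fin n → Bool) :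
    B.sigma u (flipAt v x) = B.sigma u x := by
  rw [sigma, cond_flipAt hv, sigma]

lemma condProb_flipAt (hv : v ∉ B.pa u) (huv : u ≠ v) (x : Fin n → Bool) :
    B.condProb u (flipAt v x) = B.condProb u x := by
  rw [condProb, condProb, flipAt, Function.update_of_ne huv, ← flipAt, cond_flipAt hv]

lemma phi_flipAt (hv : v ∉ B.pa u) (huv : u ≠ v) (x : Fin n → Bool) :
    B.phi u (flipAt v x) = B.phi u x := by
  rw [phi, phi, flipAt, Function.update_of_ne huv, ← flipAt, cond_flipAt hv, sigma_flipAt hv]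

lemma phiS_flipAt {S : Finset (Fin n)} (hvS : v ∉ S) (hv : ∀ u ∈ S, v ∉ B.pa u)
    (x : Fin n → Bool) : B.phiS S (flipAt v x) = B.phiS S x :=
  prod_congr rfl fun u hu => phi_flipAt (hv u hu) (ne_of_mem_of_not_mem hu hvS) x

lemma prod_condProb_flipAt {V : Finset (Fin n)} (hvV : v ∉ V) (hv : ∀ u ∈ V, v ∉ B.pa u)
    (x : Fin n → Bool) : ∏ u ∈ V, B.condProb u (flipAt v x) = ∏ u ∈ V, B.condProb u x :=
  prod_congr rfl fun u hu => condProb_flipAt (hv u hu) (ne_of_mem_of_not_mem hu hvV) x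

lemma condProb_mul_add_flipAt (hv : v ∉ B.pa v) (F : ℝ → ℝ) (x : Fin n → Bool) :
    B.condProb v x * F (B.phi v x) + B.condProb v (flipAt v x) * F (B.phi v (flipAt v x)) =
      B.cond v x * F ((1 - B.cond v x) / B.sigma v x) +
        (1 - B.cond v x) * F (-B.cond v x / B.sigma v x) := by
  rw [condProb, condProb, phi, phi, cond_flipAt hv, sigma_flipAt hv]
  cases hx : x v <;> simp [flipAt, hx, b2r, add_comm]

lemma condProb_mul_phi_ite_add_flipAt (hv : v ∉ B.pa v) (S T : Finset (Fin n))
    (x : Fin n → Bool) :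
    B.condProb v x * ((if v ∈ S then B.phi v x else 1) * (if v ∈ T then B.phi v x else 1)) +
      B.condProb v (flipAt v x) * ((if v ∈ S then B.phi v (flipAt v x) else 1) *
        (if v ∈ T then B.phi v (flipAt v x) else 1)) =
      if (v ∈ S ↔ v ∈ T) then 1 else 0 := by
  have h0 := B.cond_pos v x
  have h1 := B.cond_lt_one v x
  rw [condProb_mul_add_flipAt hv fun t => (if v ∈ S then t else 1) * (if v ∈ T then t else 1)]
  by_cases hS : v ∈ S <;> by_cases hT : v ∈ T <;> simp only [hS, hT, if_true, if_false,
    iff_true, iff_false, not_true, mul_one, one_mul]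
  · rw [sigma]
    linear_combination bernoulli_standardized_sq h0 h1
  all_goals ring

end Flip

lemma phiS_eq_ite_mul_phiS_erase (S : Finset (Fin n)) (v : Fin n) (x : Fin n → Bool) :
    B.phiS S x = (if v ∈ S then B.phi v x else 1) * B.phiS (S.erase v) x := by
  by_cases h : v ∈ S
  · rw [if_pos h, phiS, phiS, mul_prod_erase S (B.phi · x) h]
  · rw [if_neg h, one_mul, erase_eq_of_notMem h]

/-- Nodes outside `V` behave as independent fair coins, hence the factor `2 ^ #Vᶜ`. -/
theorem sum_prod_condProb_mul_phiS_mul_phiS (V : Finset (Fin n)) {S T : Finset (Fin n)}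
    (hS : S ⊆ V) (hT : T ⊆ V) :
    ∑ x, (∏ u ∈ V, B.condProb u x) * (B.phiS S x * B.phiS T x) =
      if S = T then 2 ^ #Vᶜ else 0 := by
  obtain ⟨rank, hrank⟩ := B.acyclic
  induction V using Finset.induction_on_max_value rank generalizing S T with
  | empty => simp [subset_empty.1 hS, subset_empty.1 hT, phiS]
  | insert v V hvV hmax ih =>
    have hsink : ∀ u ∈ insert v V, v ∉ B.pa u := by
      intro u hu hvu
      have := hrank u v hvu
      rcases mem_insert.1 hu with rfl | hu
      · exact lt_irrefl _ this
      · exact (hmax u hu).not_gt this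
    have hS' : S.erase v ⊆ V := subset_insert_iff.1 hS
    have hT' : T.erase v ⊆ V := subset_insert_iff.1 hT
    have hsplit (x : Fin n → Bool) :
        (∏ u ∈ insert v V, B.condProb u x) * (B.phiS S x * B.phiS T x) =
          B.condProb v x * ((if v ∈ S then B.phi v x else 1) * (if v ∈ T then B.phi v x else 1)) *
            ((∏ u ∈ V, B.condProb u x) * (B.phiS (S.erase v) x * B.phiS (T.erase v) x)) := by
      rw [prod_insert hvV, B.phiS_eq_ite_mul_phiS_erase S v, B.phiS_eq_ite_mul_phiS_erase T v]
      ring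
    have hrest (x : Fin n → Bool) :
        (∏ u ∈ V, B.condProb u (flipAt v x)) *
            (B.phiS (S.erase v) (flipAt v x) * B.phiS (T.erase v) (flipAt v x)) =
          (∏ u ∈ V, B.condProb u x) * (B.phiS (S.erase v) x * B.phiS (T.erase v) x) := by
      have hV (u) (hu : u ∈ V) : v ∉ B.pa u := hsink u (mem_insert_of_mem hu)
      rw [prod_condProb_flipAt hvV hV, phiS_flipAt (notMem_erase v S) fun u hu => hV u (hS' hu),
        phiS_flipAt (notMem_erase v T) fun u hu => hV u (hT' hu)]
    have hcard : #Vᶜ = #(insert v V)ᶜ + 1 := by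
      rw [compl_insert, card_erase_add_one (mem_compl.2 hvV)]
    rw [sum_congr rfl fun x _ => hsplit x, sum_mul_eq_of_add_flipAt _ _ _
      (condProb_mul_phi_ite_add_flipAt (hsink v (mem_insert_self v V)) S T) hrest,
      ih hS' hT', hcard, pow_succ]
    by_cases hST : S = T
    · subst hST
      simp only [iff_self, if_true]
      ring
    · rw [if_neg hST]
      split_ifs with hv he
      · exact absurd (eq_of_mem_iff_of_erase_eq hv he) hST
      all_goals simp

end BayesNet

/-- The BN-induced basis functions are orthonormal: for distinct
`S ≠ T`, `E[φ_S φ_T] = 0`, and in general `E[φ_S φ_T] = 1` iff `S = T` (else `0`),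
with respect to the inner product `⟨f,g⟩ = E_D[f g]`. -/
theorem bn_basis_orthonormal {n : ℕ} (B : BayesNet n) :
    (∀ S T : Finset (Fin n), S ≠ T →
      B.expect (fun x => B.phiS S x * B.phiS T x) = 0) ∧
    (∀ S T : Finset (Fin n),
      B.expect (fun x => B.phiS S x * B.phiS T x) = if S = T then 1 else 0) := by
  have hexpect (S T : Finset (Fin n)) :
      B.expect (fun x => B.phiS S x * B.phiS T x) = if S = T then 1 else 0 := by
    simpa [BayesNet.expect, BayesNet.prob, BayesNet.condProb] using
      B.sum_prod_condProb_mul_phiS_mul_phiS univ (subset_univ S) (subset_univ T)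
  exact ⟨fun S T hST => by rw [hexpect, if_neg hST], hexpect⟩
end
end

section
/- Let D be a Bayesian network distribution on {0,1}^n with induced basis functions φ_S. Then {φ_S : S ⊆ [n]} is an orthonormal basis of the space of real-valued functions on {0,1}^n: every function f : {0,1}^n → ℝ satisfies f(x) = Σ_{S⊆[n]} f̂_S φ_S(x) for all x ∈ {0,1}^n, where f̂_S := E_{X∼D}[f(X) φ_S(X)]. -/
/-!
A Bayesian network (BN) distribution on {0,1}^n: a DAG on [n] (encoded by parent
sets together with a rank function witnessing acyclicity) and, for each node `v`,
a conditional probability `cond v x ∈ (0,1)` of `X_v = 1` given the parent values,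
depending only on the coordinates in `pa v`.  The joint distribution is
`prob x = ∏ v, P(x_v | x_{pa v})`, and the BN-induced basis functions are
`φ_v(x) = (x_v − μ_{v,x_pa(v)})/σ_{v,x_pa(v)}`, `φ_S = ∏_{v∈S} φ_v`.
-/

open Finset

noncomputable section

lemma bn_kernel {n : ℕ} (B : BayesNet n) (x y : Fin n → Bool) :
    B.prob y * ∏ v, (1 + B.phi v x * B.phi v y) = if y = x then 1 else 0 := by
  by_cases h : y = x
  · subst h
    simp only [if_true, BayesNet.prob, ← Finset.prod_mul_distrib]
    rw [show (1:ℝ) = ∏ _v : Fin n, 1 by simp]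
    refine Finset.prod_congr rfl fun v _ => ?_
    have hc0 := B.cond_pos v y
    have hc1 := B.cond_lt_one v y
    set c := B.cond v y with hc
    have hσ2 : B.sigma v y ^ 2 = c * (1 - c) := by
      rw [BayesNet.sigma, Real.sq_sqrt (by nlinarith)]
    have hσ : B.sigma v y ≠ 0 := by
      intro h0
      rw [h0] at hσ2; nlinarith
    have hne0 : c * (1 - c) ≠ 0 := by nlinarith
    rw [BayesNet.phi, div_mul_div_comm, ← sq, ← sq, hσ2, ← hc]
    cases hyv : y v <;> simp only [hyv, b2r, if_true, if_false, Finset.prod_const_one, Bool.false_eq_true, ↓reduceIte] <;> field_simp [sub_ne_zero.mpr (ne_of_gt hc1)] <;>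
      (try ring) <;> (try tauto)
  · simp only [if_neg h]
    have hne : ∃ w, x w ≠ y w := by
      by_contra hc
      push_neg at hc
      exact h (funext fun w => (hc w).symm)
    obtain ⟨rank, hrank⟩ := B.acyclic
    set T := Finset.univ.filter (fun w => x w ≠ y w) with hT
    have hTne : T.Nonempty := by
      obtain ⟨w, hw⟩ := hne
      exact ⟨w, by simp [hT, hw]⟩
    obtain ⟨v, hvT, hvmin⟩ := Finset.exists_min_image T rank hTne
    have hvxy : x v ≠ y v := by simpa [hT] using hvT
    have hpar : ∀ u ∈ B.pa v, x u = y u := by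
      intro u hu
      by_contra hxu
      have huT : u ∈ T := by simp [hT, hxu]
      exact absurd (hrank v u hu) (not_lt.mpr (hvmin u huT))
    have hcc : B.cond v x = B.cond v y := B.cond_local v x y hpar
    have hc0 := B.cond_pos v y
    have hc1 := B.cond_lt_one v y
    set c := B.cond v y with hc
    have hσxy : B.sigma v x = B.sigma v y := by rw [BayesNet.sigma, BayesNet.sigma, hcc]
    have hσ2 : B.sigma v y ^ 2 = c * (1 - c) := by
      rw [BayesNet.sigma, Real.sq_sqrt (by nlinarith)]
    have hσ : B.sigma v y ≠ 0 := by
      intro h0; rw [h0] at hσ2; nlinarith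
    have hzero : (1 + B.phi v x * B.phi v y) = 0 := by
      rw [BayesNet.phi, BayesNet.phi, hσxy, hcc, ← hc, div_mul_div_comm, ← sq, hσ2]
      have hb : (b2r (x v) - c) * (b2r (y v) - c) = -(c * (1 - c)) := by
        cases hxv : x v <;> cases hyv : y v <;>
          simp [hxv, hyv] at hvxy ⊢ <;> simp [b2r] <;> ring
      rw [hb, neg_div, div_self (by nlinarith : c * (1 - c) ≠ 0)]
      ring
    rw [Finset.prod_eq_zero (Finset.mem_univ v) hzero, mul_zero]

/-- The BN-induced basis `{φ_S : S ⊆ [n]}` is an orthonormal basis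
of the space of real-valued functions on `{0,1}^n`: every `f` satisfies
`f(x) = Σ_S f̂_S φ_S(x)` where `f̂_S = E_D[f(X) φ_S(X)]`. -/
theorem bn_fourier_expansion {n : ℕ} (B : BayesNet n) (f : (Fin n → Bool) → ℝ)
    (x : Fin n → Bool) :
    f x = ∑ S : Finset (Fin n), B.coeff f S * B.phiS S x := by
  have hswap : ∑ S : Finset (Fin n), B.coeff f S * B.phiS S x
      = ∑ y, B.prob y * f y * ∏ v, (1 + B.phi v x * B.phi v y) := by
    simp only [BayesNet.coeff, BayesNet.expect, Finset.sum_mul]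
    rw [Finset.sum_comm]
    refine Finset.sum_congr rfl fun y _ => ?_
    have hexp : ∏ v, (1 + B.phi v x * B.phi v y)
        = ∑ S : Finset (Fin n), B.phiS S x * B.phiS S y := by
      have := Finset.prod_add (fun v : Fin n => B.phi v x * B.phi v y)
        (fun _ => (1:ℝ)) Finset.univ
      simp only [Finset.prod_const_one, mul_one] at this
      simp only [show ∀ a : ℝ, 1 + a = a + 1 from fun a => add_comm 1 a]
      rw [this, Finset.powerset_univ]
      refine Finset.sum_congr rfl fun S _ => ?_
      rw [BayesNet.phiS, BayesNet.phiS, ← Finset.prod_mul_distrib]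
    rw [hexp, Finset.mul_sum]
    refine Finset.sum_congr rfl fun S _ => ?_
    ring
  rw [hswap]
  have : ∀ y, B.prob y * f y * ∏ v, (1 + B.phi v x * B.phi v y)
      = (if y = x then 1 else 0) * f y := by
    intro y
    rw [mul_comm (B.prob y) (f y), mul_assoc, bn_kernel B x y]
    ring
  simp only [this, ite_mul, one_mul, zero_mul]
  simp
end
end

section
/- Let D be a c-bounded chain BN for a constant c ∈ (0,1/2), i.e. c ≤ μ_{i,b} ≤ 1−c for all i and b, and suppose |σ_{i,1}−σ_{i,0}| ≤ D_σ and |μ_{i,1}−μ_{i,0}| ≤ D_μ for all i, where D_σ + D_μ < 1. Then the spectral norm of any conjunction f with d literals is bounded by L1(f) ≤ ((2−D_σ−D_μ)(1−c)/(1−D_σ−D_μ))^d. -/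
/-!
A chain BN on `{0,1}^n` is a Bayesian network whose DAG is the directed path
`1 → 2 → ⋯ → n` (here indexed by `Fin n`, node `0` being the root): node `0` has
no parent and the parent of node `i > 0` is node `i−1`.  `cond i b` is
`P(X_i = 1 | X_{i−1} = b)` (for the root both values coincide and give its
unconditional mean).  The joint distribution is the product of the conditionals,
and the BN-induced Fourier basis is `φ_i(x) = (x_i − μ_{i,x_{i−1}})/σ_{i,x_{i−1}}`,
`φ_S = ∏_{i∈S} φ_i`, with spectral norm `L1(f) = Σ_S |f̂_S|`.
-/

open Finset

noncomputable section

/-- A chain Bayesian network distribution on `{0,1}^n`. -/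
structure ChainBN (n : ℕ) where
  /-- `cond i b = P(X_i = 1 | X_{i-1} = b)`; for the root `i = 0` it is its mean. -/
  cond : Fin n → Bool → ℝ
  cond_pos : ∀ i b, 0 < cond i b
  cond_lt_one : ∀ i b, cond i b < 1
  /-- the root has no parent, so its "conditional" is constant -/
  root_const : ∀ (h : 0 < n) (b b' : Bool), cond ⟨0, h⟩ b = cond ⟨0, h⟩ b'

namespace ChainBN

variable {n : ℕ}

/-- The value of the parent of node `i` under assignment `x` (root: dummy value). -/
def parentVal (x : Fin n → Bool) (i : Fin n) : Bool :=
  if (i : ℕ) = 0 then false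
  else x ⟨(i : ℕ) - 1, Nat.lt_of_le_of_lt (Nat.sub_le _ _) i.isLt⟩

/-- The joint probability mass function of the chain. -/
def prob (B : ChainBN n) (x : Fin n → Bool) : ℝ :=
  ∏ i, if x i then B.cond i (parentVal x i) else 1 - B.cond i (parentVal x i)

/-- Conditional standard deviation `σ_{i,b} = √(μ_{i,b}(1−μ_{i,b}))`. -/
def sigma (B : ChainBN n) (i : Fin n) (b : Bool) : ℝ :=
  Real.sqrt (B.cond i b * (1 - B.cond i b))

/-- BN-induced basis function of a single node. -/
def phi (B : ChainBN n) (i : Fin n) (x : Fin n → Bool) : ℝ :=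
  (b2r (x i) - B.cond i (parentVal x i)) / B.sigma i (parentVal x i)

/-- BN-induced basis function `φ_S = ∏_{i ∈ S} φ_i` (with `φ_∅ ≡ 1`). -/
def phiS (B : ChainBN n) (S : Finset (Fin n)) (x : Fin n → Bool) : ℝ :=
  ∏ i ∈ S, B.phi i x

/-- Expectation with respect to the chain distribution. -/
def expect (B : ChainBN n) (g : (Fin n → Bool) → ℝ) : ℝ :=
  ∑ x, B.prob x * g x

/-- Fourier coefficient `f̂_S = E_D[f(X) φ_S(X)]`. -/
def coeff (B : ChainBN n) (f : (Fin n → Bool) → ℝ) (S : Finset (Fin n)) : ℝ :=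
  B.expect fun x => f x * B.phiS S x

/-- Spectral norm `L1(f) = Σ_S |f̂_S|`. -/
def L1 (B : ChainBN n) (f : (Fin n → Bool) → ℝ) : ℝ :=
  ∑ S : Finset (Fin n), |B.coeff f S|

end ChainBN

/-- The conjunction `∏_{i∈T1} x_i · ∏_{j∈T0} (1−x_j)` on `{0,1}^n`. -/
def conj {n : ℕ} (T0 T1 : Finset (Fin n)) (x : Fin n → Bool) : ℝ :=
  (∏ i ∈ T1, b2r (x i)) * ∏ j ∈ T0, (1 - b2r (x j))

section AuxChain

def chainSum : ℕ → (ℕ → Bool → Bool → ℝ) → Bool → ℝ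
  | 0, _, _ => 1
  | (m+1), w, b => ∑ v : Bool, w 0 v b * chainSum m (fun i => w (i+1)) v

def pvb {n : ℕ} (b : Bool) (x : Fin n → Bool) (i : Fin n) : Bool :=
  if (i : ℕ) = 0 then b
  else x ⟨(i : ℕ) - 1, Nat.lt_of_le_of_lt (Nat.sub_le _ _) i.isLt⟩

lemma pvb_cons {n : ℕ} (b v : Bool) (y : Fin n → Bool) (i : Fin n) :
    pvb b (Fin.cons v y) i.succ = pvb v y i := by
  rcases i with ⟨j, hj⟩
  cases j with
  | zero => simp [pvb]
  | succ k =>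
    show (Fin.cons v y : Fin (n+1) → Bool) ⟨k+1, Nat.lt_succ_of_lt hj⟩
        = y ⟨k, Nat.lt_of_succ_lt hj⟩
    have h1 : (⟨k+1, Nat.lt_succ_of_lt hj⟩ : Fin (n+1))
        = (⟨k, Nat.lt_of_succ_lt hj⟩ : Fin n).succ := rfl
    rw [h1, Fin.cons_succ]

lemma pvb_cons2 {n : ℕ} (v : Bool) (y : Fin n → Bool) (i : Fin n)
    (h : (i : ℕ) < n + 1) :
    (Fin.cons v y : Fin (n+1) → Bool) ⟨(i : ℕ), h⟩ = pvb v y i := by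
  rcases i with ⟨j, hj⟩
  cases j with
  | zero => rfl
  | succ k =>
    have h1 : (⟨k+1, h⟩ : Fin (n+1)) = (⟨k, Nat.lt_of_succ_lt_succ h⟩ : Fin n).succ := rfl
    rw [h1, Fin.cons_succ]
    rfl

lemma chain_decomp : ∀ (n : ℕ) (w : ℕ → Bool → Bool → ℝ) (b : Bool),
    (∑ x : Fin n → Bool, ∏ i : Fin n, w i (x i) (pvb b x i)) = chainSum n w b := by
  intro n
  induction n with
  | zero => intro w b; simp [chainSum]
  | succ n ih =>
    intro w b
    rw [chainSum, ← Equiv.sum_comp (Fin.consEquiv (fun _ : Fin (n+1) => Bool))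
      (fun x => ∏ i : Fin (n+1), w i (x i) (pvb b x i)), Fintype.sum_prod_type]
    refine Finset.sum_congr rfl fun v _ => ?_
    rw [← ih (fun i => w (i+1)) v, Finset.mul_sum]
    refine Finset.sum_congr rfl fun y _ => ?_
    rw [Fin.prod_univ_succ]
    simp only [Fin.consEquiv_apply]
    congr 1
    refine Finset.prod_congr rfl fun i _ => ?_
    congr 1
    exact pvb_cons2 v y i _

def extb {n : ℕ} (s : Fin n → Bool) (i : ℕ) : Bool :=
  if h : i < n then s ⟨i, h⟩ else false

lemma extb_cons_zero {n : ℕ} (v : Bool) (y : Fin n → Bool) :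
    extb (Fin.cons v y) 0 = v := by
  unfold extb
  rw [dif_pos (Nat.succ_pos n)]
  rfl

lemma extb_cons_succ {n : ℕ} (v : Bool) (y : Fin n → Bool) (i : ℕ) :
    extb (Fin.cons v y) (i + 1) = extb y i := by
  unfold extb
  by_cases h : i < n
  · rw [dif_pos (by omega : i + 1 < n + 1), dif_pos h]
    have h1 : (⟨i+1, by omega⟩ : Fin (n+1)) = (⟨i, h⟩ : Fin n).succ := rfl
    rw [h1, Fin.cons_succ]
  · rw [dif_neg (by omega), dif_neg h]

lemma sumBound (N : (Bool → ℝ) → ℝ) :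
    ∀ (n : ℕ) (W : ℕ → Bool → Bool → Bool → ℝ) (C : ℕ → ℝ),
    (∀ i, 0 ≤ C i) →
    (∀ i, i < n → ∀ g : Bool → ℝ,
      N (fun b => ∑ v : Bool, W i false v b * g v)
        + N (fun b => ∑ v : Bool, W i true v b * g v) ≤ C i * N g) →
    (∑ s : Fin n → Bool, N (fun b => chainSum n (fun i => W i (extb s i)) b))
      ≤ (∏ i ∈ Finset.range n, C i) * N (fun _ => 1) := by
  intro n
  induction n with
  | zero =>
    intro W C hC h
    have huniv : (univ : Finset (Fin 0 → Bool)) = {fun _ => false} := by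
      ext x
      simp only [Finset.mem_univ, Finset.mem_singleton, true_iff]
      funext i; exact i.elim0
    rw [huniv, Finset.sum_singleton]
    simp [chainSum]
  | succ n ih =>
    intro W C hC h
    rw [← Equiv.sum_comp (Fin.consEquiv (fun _ : Fin (n+1) => Bool))
      (fun s => N (fun b => chainSum (n+1) (fun i => W i (extb s i)) b)),
      Fintype.sum_prod_type, Finset.sum_comm]
    have key : ∀ y : Fin n → Bool, ∀ v : Bool,
        (fun b => chainSum (n+1) (fun i => W i (extb (Fin.consEquiv _ (v, y)) i)) b)
        = fun b => ∑ u : Bool, W 0 v u b *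
            (fun u' => chainSum n (fun i => W (i+1) (extb y i)) u') u := by
      intro y v
      funext b
      rw [show ((Fin.consEquiv fun _ : Fin (n+1) => Bool) (v, y)) = Fin.cons v y from rfl]
      rw [chainSum]
      refine Finset.sum_congr rfl fun u _ => ?_
      congr 1
      · congr 1
        funext i
        rw [extb_cons_succ]
    calc ∑ y : Fin n → Bool, ∑ v : Bool,
          N (fun b => chainSum (n+1) (fun i => W i (extb (Fin.consEquiv _ (v, y)) i)) b)
        ≤ ∑ y : Fin n → Bool,
            C 0 * N (fun u => chainSum n (fun i => W (i+1) (extb y i)) u) := by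
          refine Finset.sum_le_sum fun y _ => ?_
          rw [Fintype.sum_bool, key y true, key y false]
          have := h 0 (by omega) (fun u => chainSum n (fun i => W (i+1) (extb y i)) u)
          linarith
      _ = C 0 * ∑ y : Fin n → Bool,
            N (fun u => chainSum n (fun i => W (i+1) (extb y i)) u) := by
          rw [Finset.mul_sum]
      _ ≤ C 0 * ((∏ i ∈ Finset.range n, C (i+1)) * N (fun _ => 1)) := by
          refine mul_le_mul_of_nonneg_left ?_ (hC 0)
          exact ih (fun i => W (i+1)) (fun i => C (i+1)) (fun i => hC (i+1))
            (fun i hi g => h (i+1) (by omega) g)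
      _ = (∏ i ∈ Finset.range (n+1), C i) * N (fun _ => 1) := by
          rw [Finset.prod_range_succ']; ring

def Nfun (lam : ℝ) (g : Bool → ℝ) : ℝ :=
  max |g false| |g true| + lam * |g true - g false|

lemma Nfun_one (lam : ℝ) : Nfun lam (fun _ => 1) = 1 := by
  unfold Nfun; norm_num

lemma abs_le_Nfun (lam : ℝ) (hlam : 0 ≤ lam) (g : Bool → ℝ) (b : Bool) :
    |g b| ≤ Nfun lam g := by
  unfold Nfun
  have h1 : |g b| ≤ max |g false| |g true| := by cases b <;> [exact le_max_left _ _; exact le_max_right _ _]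
  nlinarith [abs_nonneg (g true - g false), mul_nonneg hlam (abs_nonneg (g true - g false))]

lemma Nfun_mul_le (lam P Dp r : ℝ) (p : Bool → ℝ) (hlam : 0 ≤ lam)
    (hP : ∀ b, |p b| ≤ P) (hD : |p true - p false| ≤ Dp) :
    Nfun lam (fun b => p b * r) ≤ (P + lam * Dp) * |r| := by
  unfold Nfun
  have h1 : |p false * r| ≤ P * |r| := by
    rw [abs_mul]; exact mul_le_mul_of_nonneg_right (hP false) (abs_nonneg r)
  have h2 : |p true * r| ≤ P * |r| := by
    rw [abs_mul]; exact mul_le_mul_of_nonneg_right (hP true) (abs_nonneg r)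
  have h3 : |p true * r - p false * r| ≤ Dp * |r| := by
    rw [show p true * r - p false * r = (p true - p false) * r by ring, abs_mul]
    exact mul_le_mul_of_nonneg_right hD (abs_nonneg r)
  have h4 := max_le h1 h2
  nlinarith [mul_le_mul_of_nonneg_left h3 hlam]

def Wgt {n : ℕ} (B : ChainBN n) (T0 T1 : Finset (Fin n)) (i : ℕ) (ch v b : Bool) : ℝ :=
  if h : i < n then
    (if v then B.cond ⟨i, h⟩ b else 1 - B.cond ⟨i, h⟩ b) *
      ((if (⟨i, h⟩ : Fin n) ∈ T1 then b2r v else 1) *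
        (if (⟨i, h⟩ : Fin n) ∈ T0 then 1 - b2r v else 1) *
        (if ch then (b2r v - B.cond ⟨i, h⟩ b) / B.sigma ⟨i, h⟩ b else 1))
  else 0

def Cgt {n : ℕ} (T0 T1 : Finset (Fin n)) (K : ℝ) (i : ℕ) : ℝ :=
  if h : i < n then (if (⟨i, h⟩ : Fin n) ∈ T0 ∪ T1 then K else 1) else 1

set_option maxHeartbeats 2000000 in
lemma step_bound {n : ℕ} (B : ChainBN n) (c Dσ Dμ : ℝ)
    (hc0 : 0 < c) (hc : c < 1 / 2)
    (hbound : ∀ i b, c ≤ B.cond i b ∧ B.cond i b ≤ 1 - c)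
    (hDσ : ∀ i, |B.sigma i true - B.sigma i false| ≤ Dσ)
    (hDμ : ∀ i, |B.cond i true - B.cond i false| ≤ Dμ)
    (hsum : Dσ + Dμ < 1)
    (T0 T1 : Finset (Fin n)) (hdisj : Disjoint T0 T1)
    (i : ℕ) (hi : i < n) (g : Bool → ℝ) :
    Nfun (1/(2*(1 - Dσ - Dμ))) (fun b => ∑ v : Bool, Wgt B T0 T1 i false v b * g v)
      + Nfun (1/(2*(1 - Dσ - Dμ))) (fun b => ∑ v : Bool, Wgt B T0 T1 i true v b * g v)
      ≤ Cgt T0 T1 ((2 - Dσ - Dμ) * (1 - c) / (1 - Dσ - Dμ)) i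
          * Nfun (1/(2*(1 - Dσ - Dμ))) g := by
  have h1s : (0:ℝ) < 1 - Dσ - Dμ := by linarith
  set lam := 1/(2*(1 - Dσ - Dμ)) with hlamdef
  set K := (2 - Dσ - Dμ) * (1 - c) / (1 - Dσ - Dμ) with hKdef
  set j : Fin n := ⟨i, hi⟩ with hjdef
  have hlampos : 0 < lam := by rw [hlamdef]; positivity
  have hlam1 : lam * (1 - Dσ - Dμ) = 1/2 := by rw [hlamdef]; field_simp
  have hK1 : K * (1 - Dσ - Dμ) = (2 - Dσ - Dμ) * (1 - c) := by
    rw [hKdef]; field_simp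
  have hKpos : 0 < K := by
    rw [hKdef]; apply div_pos; nlinarith; exact h1s
  have hμc := fun b => hbound j b
  have hμpos := fun b => B.cond_pos j b
  have hμlt := fun b => B.cond_lt_one j b
  have hσpos : ∀ b, 0 < B.sigma j b := fun b =>
    Real.sqrt_pos.mpr (mul_pos (hμpos b) (by linarith [hμlt b]))
  have hσsq : ∀ b, B.sigma j b ^ 2 = B.cond j b * (1 - B.cond j b) := fun b =>
    Real.sq_sqrt (le_of_lt (mul_pos (hμpos b) (by linarith [hμlt b])))
  have hσle : ∀ b, B.sigma j b ≤ 1/2 := by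
    intro b
    have h4 : B.cond j b * (1 - B.cond j b) ≤ 1/4 := by
      nlinarith [sq_nonneg (B.cond j b - 1/2)]
    rw [ChainBN.sigma]
    calc Real.sqrt (B.cond j b * (1 - B.cond j b)) ≤ Real.sqrt (1/4) :=
          Real.sqrt_le_sqrt h4
      _ = 1/2 := by
          rw [show (1/4:ℝ) = (1/2)^2 by norm_num, Real.sqrt_sq (by norm_num : (0:ℝ) ≤ 1/2)]
  have hσabs : ∀ b, |B.sigma j b| ≤ 1/2 := fun b => by
    rw [abs_of_pos (hσpos b)]; exact hσle b
  have hW : ∀ ch v b, Wgt B T0 T1 i ch v b =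
      (if v then B.cond j b else 1 - B.cond j b) *
        ((if j ∈ T1 then b2r v else 1) *
          (if j ∈ T0 then 1 - b2r v else 1) *
          (if ch then (b2r v - B.cond j b) / B.sigma j b else 1)) := by
    intro ch v b; rw [Wgt, dif_pos hi]
  have hgf : |g false| ≤ max |g false| |g true| := le_max_left _ _
  have hgt : |g true| ≤ max |g false| |g true| := le_max_right _ _
  have hΔnn : (0:ℝ) ≤ |g true - g false| := abs_nonneg _
  have hgfN : |g false| ≤ Nfun lam g := abs_le_Nfun lam (le_of_lt hlampos) g false
  have hgtN : |g true| ≤ Nfun lam g := abs_le_Nfun lam (le_of_lt hlampos) g true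
  have hscal : 1 - c + lam ≤ K := by nlinarith [hK1, hlam1, h1s, hlampos]
  by_cases h1 : j ∈ T1
  · have h0 : j ∉ T0 := fun h0 => (Finset.disjoint_left.mp hdisj h0) h1
    have hC : Cgt T0 T1 K i = K := by
      rw [Cgt, dif_pos hi, ← hjdef, if_pos (Finset.mem_union_right T0 h1)]
    have eF : (fun b => ∑ v : Bool, Wgt B T0 T1 i false v b * g v)
        = fun b => B.cond j b * g true := by
      funext b; rw [Fintype.sum_bool, hW, hW]; simp [b2r, h1, h0]
    have eT : (fun b => ∑ v : Bool, Wgt B T0 T1 i true v b * g v)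
        = fun b => B.sigma j b * g true := by
      funext b; rw [Fintype.sum_bool, hW, hW]
      simp only [if_pos h1, if_neg h0, b2r, if_true, if_false, Bool.false_eq_true]
      have hne : B.sigma j b ≠ 0 := ne_of_gt (hσpos b)
      field_simp
      linear_combination (-(g true)) * hσsq b
    rw [eF, eT, hC]
    have bF := Nfun_mul_le lam (1-c) Dμ (g true) (B.cond j) (le_of_lt hlampos)
      (fun b => by rw [abs_of_pos (hμpos b)]; exact (hμc b).2) (hDμ j)
    have bT := Nfun_mul_le lam (1/2) Dσ (g true) (B.sigma j) (le_of_lt hlampos)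
      hσabs (hDσ j)
    have htot : ((1-c) + lam*Dμ)*|g true| + (1/2 + lam*Dσ)*|g true| ≤ K * Nfun lam g := by
      have hmul : ((1-c) + lam*Dμ) + (1/2 + lam*Dσ) ≤ K := by nlinarith [hlam1, hscal]
      have : (((1-c) + lam*Dμ) + (1/2 + lam*Dσ)) * |g true| ≤ K * Nfun lam g :=
        mul_le_mul hmul hgtN (abs_nonneg _) (le_of_lt hKpos)
      nlinarith [this]
    linarith [bF, bT]
  · by_cases h0 : j ∈ T0
    · have hC : Cgt T0 T1 K i = K := by
        rw [Cgt, dif_pos hi, ← hjdef, if_pos (Finset.mem_union_left T1 h0)]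
      have eF : (fun b => ∑ v : Bool, Wgt B T0 T1 i false v b * g v)
          = fun b => (1 - B.cond j b) * g false := by
        funext b; rw [Fintype.sum_bool, hW, hW]; simp [b2r, h1, h0]
      have eT : (fun b => ∑ v : Bool, Wgt B T0 T1 i true v b * g v)
          = fun b => (-(B.sigma j b)) * g false := by
        funext b; rw [Fintype.sum_bool, hW, hW]
        simp only [if_pos h0, if_neg h1, b2r, if_true, if_false, Bool.false_eq_true]
        have hne : B.sigma j b ≠ 0 := ne_of_gt (hσpos b)
        field_simp
        linear_combination (g false) * hσsq b
      rw [eF, eT, hC]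
      have bF := Nfun_mul_le lam (1-c) Dμ (g false) (fun b => 1 - B.cond j b)
        (le_of_lt hlampos)
        (fun b => by
          rw [abs_of_pos (by linarith [hμlt b] : (0:ℝ) < 1 - B.cond j b)]
          linarith [(hμc b).1])
        (by
          rw [show (1 - B.cond j true) - (1 - B.cond j false)
              = -(B.cond j true - B.cond j false) by ring, abs_neg]
          exact hDμ j)
      have bT := Nfun_mul_le lam (1/2) Dσ (g false) (fun b => -(B.sigma j b))
        (le_of_lt hlampos)
        (fun b => by rw [abs_neg]; exact hσabs b)
        (by
          rw [show -(B.sigma j true) - -(B.sigma j false)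
              = -(B.sigma j true - B.sigma j false) by ring, abs_neg]
          exact hDσ j)
      have htot : ((1-c) + lam*Dμ)*|g false| + (1/2 + lam*Dσ)*|g false| ≤ K * Nfun lam g := by
        have hmul : ((1-c) + lam*Dμ) + (1/2 + lam*Dσ) ≤ K := by nlinarith [hlam1, hscal]
        have : (((1-c) + lam*Dμ) + (1/2 + lam*Dσ)) * |g false| ≤ K * Nfun lam g :=
          mul_le_mul hmul hgfN (abs_nonneg _) (le_of_lt hKpos)
        nlinarith [this]
      linarith [bF, bT]
    · have hC : Cgt T0 T1 K i = 1 := by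
        rw [Cgt, dif_pos hi, ← hjdef,
          if_neg (by simp [h0, h1] : j ∉ T0 ∪ T1)]
      have eF : (fun b => ∑ v : Bool, Wgt B T0 T1 i false v b * g v)
          = fun b => (1 - B.cond j b) * g false + B.cond j b * g true := by
        funext b; rw [Fintype.sum_bool, hW, hW]; simp [b2r, h1, h0]; ring
      have eT : (fun b => ∑ v : Bool, Wgt B T0 T1 i true v b * g v)
          = fun b => B.sigma j b * (g true - g false) := by
        funext b; rw [Fintype.sum_bool, hW, hW]
        simp only [if_neg h1, if_neg h0, b2r, if_true, if_false, Bool.false_eq_true]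
        have hne : B.sigma j b ≠ 0 := ne_of_gt (hσpos b)
        field_simp
        linear_combination (-(g true - g false)) * hσsq b
      rw [eF, eT, hC, one_mul]
      have bT := Nfun_mul_le lam (1/2) Dσ (g true - g false) (B.sigma j)
        (le_of_lt hlampos) hσabs (hDσ j)
      have bF : Nfun lam (fun b => (1 - B.cond j b) * g false + B.cond j b * g true)
          ≤ max |g false| |g true| + lam * (Dμ * |g true - g false|) := by
        unfold Nfun
        have m1 : ∀ b : Bool, |(1 - B.cond j b) * g false + B.cond j b * g true|
            ≤ max |g false| |g true| := by
          intro b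
          have ha : |(1 - B.cond j b) * g false + B.cond j b * g true|
              ≤ |1 - B.cond j b| * |g false| + |B.cond j b| * |g true| := by
            calc |(1 - B.cond j b) * g false + B.cond j b * g true|
                ≤ |(1 - B.cond j b) * g false| + |B.cond j b * g true| := abs_add_le _ _
              _ = |1 - B.cond j b| * |g false| + |B.cond j b| * |g true| := by
                  rw [abs_mul, abs_mul]
          rw [abs_of_pos (by linarith [hμlt b] : (0:ℝ) < 1 - B.cond j b),
            abs_of_pos (hμpos b)] at ha
          nlinarith [mul_le_mul_of_nonneg_left hgf
              (by linarith [hμlt b] : (0:ℝ) ≤ 1 - B.cond j b),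
            mul_le_mul_of_nonneg_left hgt (le_of_lt (hμpos b))]
        have m2 : |((1 - B.cond j true) * g false + B.cond j true * g true)
            - ((1 - B.cond j false) * g false + B.cond j false * g true)|
            ≤ Dμ * |g true - g false| := by
          rw [show ((1 - B.cond j true) * g false + B.cond j true * g true)
              - ((1 - B.cond j false) * g false + B.cond j false * g true)
              = (B.cond j true - B.cond j false) * (g true - g false) by ring, abs_mul]
          exact mul_le_mul_of_nonneg_right (hDμ j) hΔnn
        simp only []
        exact add_le_add (max_le (m1 false) (m1 true))
          (mul_le_mul_of_nonneg_left m2 (le_of_lt hlampos))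
      have hlin : lam * (Dμ * |g true - g false|) + (1/2 + lam*Dσ) * |g true - g false|
          = lam * |g true - g false| := by
        linear_combination (-(|g true - g false|)) * hlam1
      have hNg : Nfun lam g = max |g false| |g true| + lam * |g true - g false| := rfl
      linarith [bF, bT, hlin, hNg]



lemma coeff_eq {n : ℕ} (B : ChainBN n) (T0 T1 : Finset (Fin n)) (s : Fin n → Bool) :
    B.coeff (conj T0 T1) (Finset.univ.filter fun i => s i = true)
      = chainSum n (fun i => Wgt B T0 T1 i (extb s i)) false := by
  rw [← chain_decomp]
  simp only [ChainBN.coeff, ChainBN.expect]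
  refine Finset.sum_congr rfl fun x _ => ?_
  simp only [conj, ChainBN.prob, ChainBN.phiS, ChainBN.phi]
  rw [Finset.prod_filter]
  rw [show (∏ i ∈ T1, b2r (x i)) = ∏ i : Fin n, (if i ∈ T1 then b2r (x i) else 1) from by
    rw [Finset.prod_ite_mem, Finset.univ_inter]]
  rw [show (∏ j ∈ T0, (1 - b2r (x j))) = ∏ i : Fin n, (if i ∈ T0 then 1 - b2r (x i) else 1) from by
    rw [Finset.prod_ite_mem, Finset.univ_inter]]
  rw [← Finset.prod_mul_distrib, ← Finset.prod_mul_distrib, ← Finset.prod_mul_distrib]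
  refine Finset.prod_congr rfl fun i _ => ?_
  have hext : extb s (i : ℕ) = s i := by
    rw [extb, dif_pos i.isLt, Fin.eta]
  have hpv : pvb false x i = ChainBN.parentVal x i := rfl
  rw [Wgt, dif_pos i.isLt, hext, hpv]

lemma prodC {n : ℕ} (T0 T1 : Finset (Fin n)) (K : ℝ) :
    ∏ i ∈ Finset.range n, Cgt T0 T1 K i = K ^ (T0 ∪ T1).card := by
  rw [← Fin.prod_univ_eq_prod_range]
  rw [Finset.prod_congr rfl (fun (i : Fin n) _ => show Cgt T0 T1 K (i : ℕ)
    = if i ∈ T0 ∪ T1 then K else 1 from by rw [Cgt, dif_pos i.isLt, Fin.eta])]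
  rw [Finset.prod_ite_mem, Finset.univ_inter, Finset.prod_const]

end AuxChain

/-- Theorem: L1 bound for difference-bounded chains. If the chain
is `c`-bounded for `c ∈ (0,1/2)`, `|σ_{i,1} − σ_{i,0}| ≤ D_σ` and
`|μ_{i,1} − μ_{i,0}| ≤ D_μ` for all `i`, with `D_σ + D_μ < 1`, then every
conjunction with `d` literals satisfies
`L1(f) ≤ ((2 − D_σ − D_μ)(1 − c)/(1 − D_σ − D_μ))^d`. -/

theorem chain_L1_bound {n : ℕ} (B : ChainBN n) (c Dσ Dμ : ℝ)
    (hc0 : 0 < c) (hc : c < 1 / 2)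
    (hbound : ∀ i b, c ≤ B.cond i b ∧ B.cond i b ≤ 1 - c)
    (hDσ : ∀ i, |B.sigma i true - B.sigma i false| ≤ Dσ)
    (hDμ : ∀ i, |B.cond i true - B.cond i false| ≤ Dμ)
    (hsum : Dσ + Dμ < 1)
    (T0 T1 : Finset (Fin n)) (hdisj : Disjoint T0 T1)
    (d : ℕ) (hd : (T0 ∪ T1).card = d) :
    B.L1 (conj T0 T1) ≤ ((2 - Dσ - Dμ) * (1 - c) / (1 - Dσ - Dμ)) ^ d := by
  classical
  have h1s : (0:ℝ) < 1 - Dσ - Dμ := by linarith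
  have hlampos : (0:ℝ) < 1/(2*(1 - Dσ - Dμ)) := by positivity
  have hKpos : (0:ℝ) < (2 - Dσ - Dμ) * (1 - c) / (1 - Dσ - Dμ) := by
    apply div_pos; nlinarith; exact h1s
  set lam := 1/(2*(1 - Dσ - Dμ)) with hlamdef
  set K := (2 - Dσ - Dμ) * (1 - c) / (1 - Dσ - Dμ) with hKdef
  let e : (Fin n → Bool) ≃ Finset (Fin n) :=
    { toFun := fun s => Finset.univ.filter fun i => s i = true
      invFun := fun S i => decide (i ∈ S)
      left_inv := by intro s; funext i; simp
      right_inv := by intro S; ext i; simp }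
  have hL1 : B.L1 (conj T0 T1)
      = ∑ s : Fin n → Bool, |B.coeff (conj T0 T1) (Finset.univ.filter fun i => s i = true)| := by
    rw [ChainBN.L1]
    exact (Fintype.sum_equiv e
      (fun s => |B.coeff (conj T0 T1) (Finset.univ.filter fun i => s i = true)|)
      (fun S => |B.coeff (conj T0 T1) S|) (fun s => rfl)).symm
  rw [hL1, ← hd, ← prodC T0 T1 K]
  have hCnn : ∀ i, 0 ≤ Cgt T0 T1 K i := by
    intro i
    rw [Cgt]
    split
    · split
      · exact le_of_lt hKpos
      · norm_num
    · norm_num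
  calc ∑ s : Fin n → Bool, |B.coeff (conj T0 T1) (Finset.univ.filter fun i => s i = true)|
      = ∑ s : Fin n → Bool, |chainSum n (fun i => Wgt B T0 T1 i (extb s i)) false| := by
        exact Finset.sum_congr rfl fun s _ => by rw [coeff_eq]
    _ ≤ ∑ s : Fin n → Bool, Nfun lam (fun b => chainSum n (fun i => Wgt B T0 T1 i (extb s i)) b) := by
        refine Finset.sum_le_sum fun s _ => ?_
        exact abs_le_Nfun lam (le_of_lt hlampos) _ false
    _ ≤ (∏ i ∈ Finset.range n, Cgt T0 T1 K i) * Nfun lam (fun _ => 1) := by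
        exact sumBound (Nfun lam) n (Wgt B T0 T1) (Cgt T0 T1 K) hCnn
          (fun i hi g => step_bound B c Dσ Dμ hc0 hc hbound hDσ hDμ hsum T0 T1 hdisj i hi g)
    _ = (∏ i ∈ Finset.range n, Cgt T0 T1 K i) ^ 1 * 1 := by rw [Nfun_one, pow_one]
    _ = (∏ i ∈ Finset.range n, Cgt T0 T1 K i) := by ring
end
end

section
/- Let D be a c-bounded chain BN for a constant c ∈ (0,1/2) such that |μ_{i,1}−μ_{i,0}| ≤ 0.1 for all i. Then |σ_{i,1}−σ_{i,0}| ≤ 0.4 for all i, so D_μ + D_σ ≤ 0.5, and the spectral norm of any conjunction f with d literals satisfies L1(f) ≤ (3(1−c))^d. -/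
/-!
A chain BN on `{0,1}^n` is a Bayesian network whose DAG is the directed path
`1 → 2 → ⋯ → n` (here indexed by `Fin n`, node `0` being the root): node `0` has
no parent and the parent of node `i > 0` is node `i−1`.  `cond i b` is
`P(X_i = 1 | X_{i−1} = b)` (for the root both values coincide and give its
unconditional mean).  The joint distribution is the product of the conditionals,
and the BN-induced Fourier basis is `φ_i(x) = (x_i − μ_{i,x_{i−1}})/σ_{i,x_{i−1}}`,
`φ_S = ∏_{i∈S} φ_i`, with spectral norm `L1(f) = Σ_S |f̂_S|`.
-/

open Finset

noncomputable section

/-! ### Auxiliary development -/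


namespace ChainAux

open ChainBN

variable {n : ℕ}

/-- `f` depends only on coordinates with index `< k`. -/
def DependsOn (f : (Fin n → Bool) → ℝ) (k : ℕ) : Prop :=
  ∀ x y : Fin n → Bool, (∀ i : Fin n, (i : ℕ) < k → x i = y i) → f x = f y

lemma DependsOn.mono {f : (Fin n → Bool) → ℝ} {k k' : ℕ} (h : DependsOn f k)
    (hkk : k ≤ k') : DependsOn f k' := by
  intro x y hxy
  exact h x y fun i hi => hxy i (lt_of_lt_of_le hi hkk)

lemma dependsOn_const (c : ℝ) (k : ℕ) : DependsOn (fun _ : Fin n → Bool => c) k :=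
  fun _ _ _ => rfl

lemma DependsOn.mul {f g : (Fin n → Bool) → ℝ} {k : ℕ} (hf : DependsOn f k)
    (hg : DependsOn g k) : DependsOn (fun x => f x * g x) k := by
  intro x y hxy; simp only []; rw [hf x y hxy, hg x y hxy]

lemma dependsOn_phi (B : ChainBN n) (j : Fin n) :
    DependsOn (B.phi j) ((j : ℕ) + 1) := by
  intro x y hxy
  have h1 : x j = y j := hxy j (Nat.lt_succ_self _)
  have h2 : parentVal x j = parentVal y j := by
    unfold parentVal
    split
    · rfl
    · exact hxy _ (by simp)
  unfold phi
  rw [h1, h2]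

lemma dependsOn_phi' (B : ChainBN n) (j : Fin n) {k : ℕ} (h : (j : ℕ) < k) :
    DependsOn (B.phi j) k := (dependsOn_phi B j).mono h

lemma dependsOn_phiS (B : ChainBN n) (S : Finset (Fin n)) {k : ℕ}
    (h : ∀ t ∈ S, (t : ℕ) < k) : DependsOn (B.phiS S) k := by
  intro x y hxy
  unfold phiS
  exact Finset.prod_congr rfl fun t ht => dependsOn_phi' B t (h t ht) x y hxy

lemma dependsOn_conj (T0 T1 : Finset (Fin n)) {k : ℕ}
    (h0 : ∀ t ∈ T0, (t : ℕ) < k) (h1 : ∀ t ∈ T1, (t : ℕ) < k) :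
    DependsOn (conj T0 T1) k := by
  intro x y hxy
  unfold conj
  congr 1
  · exact Finset.prod_congr rfl fun t ht => by rw [hxy t (h1 t ht)]
  · exact Finset.prod_congr rfl fun t ht => by rw [hxy t (h0 t ht)]

/-! ### Splitting sums over assignments at a coordinate -/

def setAt (j : Fin n) (b : Bool) (rest : {i : Fin n // i ≠ j} → Bool) :
    Fin n → Bool := fun i => if h : i = j then b else rest ⟨i, h⟩

@[simp] lemma setAt_same (j : Fin n) (b : Bool) (rest : {i : Fin n // i ≠ j} → Bool) :
    setAt j b rest j = b := by simp [setAt]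

lemma setAt_ne (j : Fin n) (b : Bool) (rest : {i : Fin n // i ≠ j} → Bool)
    {i : Fin n} (h : i ≠ j) : setAt j b rest i = rest ⟨i, h⟩ := by simp [setAt, h]

lemma setAt_agree (j : Fin n) (b b' : Bool) (rest : {i : Fin n // i ≠ j} → Bool)
    {i : Fin n} (h : i ≠ j) : setAt j b rest i = setAt j b' rest i := by
  rw [setAt_ne j b rest h, setAt_ne j b' rest h]

def splitEquiv (j : Fin n) : (Fin n → Bool) ≃ Bool × ({i : Fin n // i ≠ j} → Bool) where
  toFun x := (x j, fun i => x i.1)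
  invFun p := setAt j p.1 p.2
  left_inv x := by
    funext i
    by_cases h : i = j
    · subst h; simp [setAt]
    · simp [setAt, h]
  right_inv p := by
    ext i
    · simp [setAt]
    · simp [setAt, i.2]

lemma sum_pair (j : Fin n) (H : (Fin n → Bool) → ℝ) :
    ∑ x, H x = ∑ rest : {i : Fin n // i ≠ j} → Bool,
      (H (setAt j true rest) + H (setAt j false rest)) := by
  rw [← Equiv.sum_comp (splitEquiv j).symm H, Fintype.sum_prod_type_right]
  refine Finset.sum_congr rfl fun rest _ => ?_
  rw [Fintype.sum_bool]
  rfl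

end ChainAux

namespace ChainAux
open ChainBN
variable {n : ℕ}

/-! ### Partial (prefix) probabilities -/

def fac (B : ChainBN n) (x : Fin n → Bool) (i : Fin n) : ℝ :=
  if x i then B.cond i (parentVal x i) else 1 - B.cond i (parentVal x i)

lemma prob_eq_fac (B : ChainBN n) (x : Fin n → Bool) :
    B.prob x = ∏ i, fac B x i := rfl

def probUpTo (B : ChainBN n) (k : ℕ) (x : Fin n → Bool) : ℝ :=
  ∏ i : Fin n, if (i : ℕ) < k then fac B x i else 1/2

lemma probUpTo_n (B : ChainBN n) (x : Fin n → Bool) :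
    probUpTo B n x = B.prob x := by
  rw [prob_eq_fac, probUpTo]
  exact Finset.prod_congr rfl fun i _ => if_pos i.isLt

lemma parentVal_setAt (j : Fin n) (b b' : Bool) (rest : {i : Fin n // i ≠ j} → Bool) :
    parentVal (setAt j b rest) j = parentVal (setAt j b' rest) j := by
  unfold parentVal
  split
  · rfl
  · refine setAt_agree j b b' rest ?_
    intro h
    have := congrArg Fin.val h
    simp at this
    omega

lemma fac_setAt_eq (B : ChainBN n) (j : Fin n) (rest : {i : Fin n // i ≠ j} → Bool)
    {i : Fin n} (hij : (i : ℕ) < (j : ℕ)) (b b' : Bool) :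
    fac B (setAt j b rest) i = fac B (setAt j b' rest) i := by
  have hne : i ≠ j := fun h => absurd (congrArg Fin.val h) (Nat.ne_of_lt hij)
  have h1 : setAt j b rest i = setAt j b' rest i := setAt_agree j b b' rest hne
  have h2 : parentVal (setAt j b rest) i = parentVal (setAt j b' rest) i := by
    unfold parentVal
    split
    · rfl
    · refine setAt_agree j b b' rest ?_
      intro h
      have := congrArg Fin.val h
      simp at this
      omega
  unfold fac
  rw [h1, h2]

lemma probUpTo_succ_split (B : ChainBN n) (j : Fin n)
    (b : Bool) (rest : {i : Fin n // i ≠ j} → Bool) :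
    probUpTo B ((j : ℕ) + 1) (setAt j b rest)
      = fac B (setAt j b rest) j
        * ∏ i ∈ Finset.univ.erase j,
            (if (i : ℕ) < (j : ℕ) then fac B (setAt j b rest) i else 1/2) := by
  unfold probUpTo
  rw [← Finset.mul_prod_erase Finset.univ _ (Finset.mem_univ j)]
  congr 1
  · rw [if_pos (Nat.lt_succ_self _)]
  · refine Finset.prod_congr rfl fun i hi => ?_
    have hne : i ≠ j := (Finset.mem_erase.mp hi).1
    have hv : (i : ℕ) ≠ (j : ℕ) := fun h => hne (Fin.ext h)
    exact if_congr (by omega) rfl rfl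

lemma probUpTo_curr_split (B : ChainBN n) (j : Fin n)
    (b : Bool) (rest : {i : Fin n // i ≠ j} → Bool) :
    probUpTo B (j : ℕ) (setAt j b rest)
      = (1/2)
        * ∏ i ∈ Finset.univ.erase j,
            (if (i : ℕ) < (j : ℕ) then fac B (setAt j b rest) i else 1/2) := by
  unfold probUpTo
  rw [← Finset.mul_prod_erase Finset.univ _ (Finset.mem_univ j)]
  congr 1
  rw [if_neg (lt_irrefl _)]

lemma erase_prod_eq (B : ChainBN n) (j : Fin n) (rest : {i : Fin n // i ≠ j} → Bool)
    (b b' : Bool) :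
    (∏ i ∈ Finset.univ.erase j,
      (if (i : ℕ) < (j : ℕ) then fac B (setAt j b rest) i else 1/2))
    = ∏ i ∈ Finset.univ.erase j,
      (if (i : ℕ) < (j : ℕ) then fac B (setAt j b' rest) i else 1/2) := by
  refine Finset.prod_congr rfl fun i _ => ?_
  by_cases h : (i : ℕ) < (j : ℕ)
  · rw [if_pos h, if_pos h, fac_setAt_eq B j rest h b b']
  · rw [if_neg h, if_neg h]

/-- values of everything at the pair of points -/
lemma fac_setAt_true (B : ChainBN n) (j : Fin n) (rest : {i : Fin n // i ≠ j} → Bool) :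
    fac B (setAt j true rest) j = B.cond j (parentVal (setAt j true rest) j) := by
  unfold fac; rw [setAt_same]; simp

lemma fac_setAt_false (B : ChainBN n) (j : Fin n) (rest : {i : Fin n // i ≠ j} → Bool) :
    fac B (setAt j false rest) j = 1 - B.cond j (parentVal (setAt j false rest) j) := by
  unfold fac; rw [setAt_same]; simp

lemma phi_setAt (B : ChainBN n) (j : Fin n) (b : Bool) (rest : {i : Fin n // i ≠ j} → Bool) :
    B.phi j (setAt j b rest)
      = (b2r b - B.cond j (parentVal (setAt j b rest) j))
          / B.sigma j (parentVal (setAt j b rest) j) := by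
  unfold phi; rw [setAt_same]

lemma sigma_pos (B : ChainBN n) (i : Fin n) (b : Bool) : 0 < B.sigma i b := by
  apply Real.sqrt_pos.mpr
  have h1 := B.cond_pos i b
  have h2 := B.cond_lt_one i b
  nlinarith

lemma sigma_sq (B : ChainBN n) (i : Fin n) (b : Bool) :
    B.sigma i b ^ 2 = B.cond i b * (1 - B.cond i b) := by
  apply Real.sq_sqrt
  have h1 := B.cond_pos i b
  have h2 := B.cond_lt_one i b
  nlinarith

/-! ### The three key per-coordinate identities -/

lemma K0 (B : ChainBN n) (j : Fin n) (F : (Fin n → Bool) → ℝ) (hF : DependsOn F (j : ℕ)) :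
    ∑ x, probUpTo B ((j : ℕ) + 1) x * F x = ∑ x, probUpTo B (j : ℕ) x * F x := by
  rw [sum_pair j, sum_pair j (fun x => probUpTo B (j : ℕ) x * F x)]
  refine Finset.sum_congr rfl fun rest _ => ?_
  have hFeq : F (setAt j true rest) = F (setAt j false rest) := by
    refine hF _ _ fun i hi => setAt_agree j true false rest ?_
    exact fun h => absurd (congrArg Fin.val h) (Nat.ne_of_lt hi)
  rw [probUpTo_succ_split, probUpTo_succ_split, probUpTo_curr_split, probUpTo_curr_split,
    erase_prod_eq B j rest false true, fac_setAt_true, fac_setAt_false, hFeq,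
    parentVal_setAt j false true]
  ring

lemma K1 (B : ChainBN n) (j : Fin n) (F : (Fin n → Bool) → ℝ) (hF : DependsOn F (j : ℕ)) :
    ∑ x, probUpTo B ((j : ℕ) + 1) x * (F x * B.phi j x) = 0 := by
  rw [sum_pair j]
  refine Finset.sum_eq_zero fun rest _ => ?_
  have hFeq : F (setAt j true rest) = F (setAt j false rest) := by
    refine hF _ _ fun i hi => setAt_agree j true false rest ?_
    exact fun h => absurd (congrArg Fin.val h) (Nat.ne_of_lt hi)
  rw [probUpTo_succ_split, probUpTo_succ_split,
    erase_prod_eq B j rest false true, fac_setAt_true, fac_setAt_false, hFeq,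
    phi_setAt, phi_setAt, parentVal_setAt j false true]
  set pv := parentVal (setAt j true rest) j
  set R := ∏ i ∈ Finset.univ.erase j,
      (if (i : ℕ) < (j : ℕ) then fac B (setAt j true rest) i else 1/2) with hR
  have hσ : B.sigma j pv ≠ 0 := ne_of_gt (sigma_pos B j pv)
  have key : B.cond j pv * ((b2r true - B.cond j pv) / B.sigma j pv)
      + (1 - B.cond j pv) * ((b2r false - B.cond j pv) / B.sigma j pv) = 0 := by
    rw [show b2r true = (1:ℝ) from rfl, show b2r false = (0:ℝ) from rfl]
    field_simp
    ring
  linear_combination R * F (setAt j false rest) * key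

lemma K2 (B : ChainBN n) (j : Fin n) (F : (Fin n → Bool) → ℝ) (hF : DependsOn F (j : ℕ)) :
    ∑ x, probUpTo B ((j : ℕ) + 1) x * (F x * (B.phi j x) ^ 2)
      = ∑ x, probUpTo B (j : ℕ) x * F x := by
  rw [sum_pair j, sum_pair j (fun x => probUpTo B (j : ℕ) x * F x)]
  refine Finset.sum_congr rfl fun rest _ => ?_
  have hFeq : F (setAt j true rest) = F (setAt j false rest) := by
    refine hF _ _ fun i hi => setAt_agree j true false rest ?_
    exact fun h => absurd (congrArg Fin.val h) (Nat.ne_of_lt hi)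
  rw [probUpTo_succ_split, probUpTo_succ_split, probUpTo_curr_split, probUpTo_curr_split,
    erase_prod_eq B j rest false true, fac_setAt_true, fac_setAt_false, hFeq,
    phi_setAt, phi_setAt, parentVal_setAt j false true]
  set pv := parentVal (setAt j true rest) j
  set R := ∏ i ∈ Finset.univ.erase j,
      (if (i : ℕ) < (j : ℕ) then fac B (setAt j true rest) i else 1/2) with hR
  have hσ : B.sigma j pv ≠ 0 := ne_of_gt (sigma_pos B j pv)
  have hσ2 : B.sigma j pv ^ 2 = B.cond j pv * (1 - B.cond j pv) := sigma_sq B j pv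
  have key : B.cond j pv * ((b2r true - B.cond j pv) / B.sigma j pv) ^ 2
      + (1 - B.cond j pv) * ((b2r false - B.cond j pv) / B.sigma j pv) ^ 2 = 1 := by
    have h0 : B.cond j pv ≠ 0 := ne_of_gt (B.cond_pos j pv)
    have h1 : (1:ℝ) - B.cond j pv ≠ 0 := by
      have := B.cond_lt_one j pv; intro h; rw [sub_eq_zero] at h; exact absurd h.symm (ne_of_lt this)
    rw [show b2r true = (1:ℝ) from rfl, show b2r false = (0:ℝ) from rfl, div_pow, div_pow, hσ2]
    field_simp
    ring
  linear_combination R * F (setAt j false rest) * key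

end ChainAux
namespace ChainAux
open ChainBN
variable {n : ℕ}

/-! ### Marginalization -/

lemma marg_aux (B : ChainBN n) (F : (Fin n → Bool) → ℝ) (k : ℕ) (hF : DependsOn F k) :
    ∀ j, k ≤ j → j ≤ n → ∑ x, probUpTo B j x * F x = ∑ x, probUpTo B k x * F x := by
  intro j
  induction j with
  | zero => intro hk _; rw [Nat.le_zero.mp hk]
  | succ m ih =>
    intro hk hm
    rcases Nat.lt_or_ge m k with h | h
    · have : k = m + 1 := le_antisymm hk h
      rw [this]
    · have hmn : m < n := Nat.lt_of_succ_le hm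
      have := K0 B ⟨m, hmn⟩ F (hF.mono h)
      simp only [Fin.val_mk] at this
      rw [this, ih h (le_of_lt hmn)]

lemma expect_eq_probUpTo (B : ChainBN n) (F : (Fin n → Bool) → ℝ) (k : ℕ)
    (hF : DependsOn F k) (hk : k ≤ n) :
    B.expect F = ∑ x, probUpTo B k x * F x := by
  unfold ChainBN.expect
  rw [← marg_aux B F k hF n hk (le_refl n)]
  exact Finset.sum_congr rfl fun x _ => by rw [probUpTo_n]

/-- Tower lemma 1: `E[H · φ_j] = 0` when `H` depends only on coordinates `< j`. -/
lemma expect_mul_phi (B : ChainBN n) (j : Fin n) (H : (Fin n → Bool) → ℝ)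
    (hH : DependsOn H (j : ℕ)) :
    B.expect (fun x => H x * B.phi j x) = 0 := by
  have hd : DependsOn (fun x => H x * B.phi j x) ((j : ℕ) + 1) :=
    (hH.mono (Nat.le_succ _)).mul (dependsOn_phi B j)
  rw [expect_eq_probUpTo B _ ((j : ℕ) + 1) hd (Nat.succ_le_of_lt j.isLt)]
  exact K1 B j H hH

/-- Tower lemma 2: `E[H · φ_j²] = E[H]` when `H` depends only on coordinates `< j`. -/
lemma expect_mul_phi_sq (B : ChainBN n) (j : Fin n) (H : (Fin n → Bool) → ℝ)
    (hH : DependsOn H (j : ℕ)) :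
    B.expect (fun x => H x * (B.phi j x) ^ 2) = B.expect H := by
  have hd : DependsOn (fun x => H x * (B.phi j x) ^ 2) ((j : ℕ) + 1) := by
    intro x y hxy
    simp only []
    rw [hH.mono (Nat.le_succ _) x y hxy, dependsOn_phi B j x y hxy]
  rw [expect_eq_probUpTo B _ ((j : ℕ) + 1) hd (Nat.succ_le_of_lt j.isLt),
    expect_eq_probUpTo B H (j : ℕ) hH (le_of_lt j.isLt)]
  exact K2 B j H hH

/-! ### Coefficient lemmas -/

lemma coeff_eq_expect (B : ChainBN n) (f : (Fin n → Bool) → ℝ) (S : Finset (Fin n)) :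
    B.coeff f S = B.expect fun x => f x * B.phiS S x := rfl

/-- Coefficients above the "support" of `h` vanish. -/
lemma coeff_eq_zero (B : ChainBN n) (h : (Fin n → Bool) → ℝ) {k : ℕ}
    (hh : DependsOn h k) {S : Finset (Fin n)} {j₀ : Fin n} (hj₀ : j₀ ∈ S)
    (hkj : k ≤ (j₀ : ℕ)) : B.coeff h S = 0 := by
  have hne : S.Nonempty := ⟨j₀, hj₀⟩
  set j := S.max' hne with hj
  have hjS : j ∈ S := S.max'_mem hne
  have hkj' : k ≤ (j : ℕ) := le_trans hkj (by exact_mod_cast S.le_max' j₀ hj₀)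
  have hsplit : ∀ x, h x * B.phiS S x = (h x * B.phiS (S.erase j) x) * B.phi j x := by
    intro x
    unfold ChainBN.phiS
    rw [← Finset.mul_prod_erase S _ hjS]
    ring
  rw [coeff_eq_expect]
  calc B.expect (fun x => h x * B.phiS S x)
      = B.expect (fun x => (h x * B.phiS (S.erase j) x) * B.phi j x) := by
        unfold ChainBN.expect
        exact Finset.sum_congr rfl fun x _ => by dsimp only; rw [hsplit x]
    _ = 0 := by
        apply expect_mul_phi
        apply DependsOn.mul (hh.mono hkj')
        apply dependsOn_phiS
        intro t ht
        have h1 := (Finset.mem_erase.mp ht).1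
        have h2 := S.le_max' t (Finset.mem_erase.mp ht).2
        have : (t : ℕ) ≠ (j : ℕ) := fun hc => h1 (Fin.ext hc)
        omega

/-- The key shift formula for coefficients of `h · φ_i`. -/
lemma coeff_mul_phi (B : ChainBN n) (h : (Fin n → Bool) → ℝ) (i : Fin n)
    (hh : DependsOn h (i : ℕ)) (S : Finset (Fin n)) :
    B.coeff (fun x => h x * B.phi i x) S
      = if i ∈ S then B.coeff h (S.erase i) else 0 := by
  by_cases hgt : ∃ j ∈ S.erase i, (i : ℕ) < (j : ℕ)
  · obtain ⟨j', hj'mem, hj'⟩ := hgt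
    have hne : (S.erase i).Nonempty := ⟨j', hj'mem⟩
    set j := (S.erase i).max' hne with hjdef
    have hjmem : j ∈ S.erase i := Finset.max'_mem _ hne
    have hij : (i : ℕ) < (j : ℕ) := lt_of_lt_of_le hj'
      (by exact_mod_cast (S.erase i).le_max' j' hj'mem)
    have hjS : j ∈ S := (Finset.mem_erase.mp hjmem).2
    have lhs0 : B.coeff (fun x => h x * B.phi i x) S = 0 := by
      have hsplit : ∀ x, (h x * B.phi i x) * B.phiS S x
          = ((h x * B.phi i x * B.phiS (S.erase j) x)) * B.phi j x := by
        intro x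
        unfold ChainBN.phiS
        rw [← Finset.mul_prod_erase S _ hjS]
        ring
      rw [coeff_eq_expect]
      calc B.expect (fun x => (h x * B.phi i x) * B.phiS S x)
          = B.expect (fun x => (h x * B.phi i x * B.phiS (S.erase j) x) * B.phi j x) := by
            unfold ChainBN.expect
            exact Finset.sum_congr rfl fun x _ => by dsimp only; rw [hsplit x]
        _ = 0 := by
            apply expect_mul_phi
            apply DependsOn.mul
            · exact (hh.mono (le_of_lt hij)).mul (dependsOn_phi' B i hij)
            · apply dependsOn_phiS
              intro t ht
              have h1 := (Finset.mem_erase.mp ht).1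
              by_cases hti : t = i
              · subst hti; exact hij
              · have htS : t ∈ S.erase i :=
                  Finset.mem_erase.mpr ⟨hti, (Finset.mem_erase.mp ht).2⟩
                have h2 := (S.erase i).le_max' t htS
                have : (t : ℕ) ≠ (j : ℕ) := fun hc => h1 (Fin.ext hc)
                have : (t : ℕ) ≤ (j : ℕ) := by exact_mod_cast h2
                omega
    rw [lhs0]
    by_cases hiS : i ∈ S
    · rw [if_pos hiS, coeff_eq_zero B h hh hjmem (le_of_lt hij)]
    · rw [if_neg hiS]
  · push_neg at hgt
    -- every element of `S.erase i` is `< i`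
    have hlt : ∀ t ∈ S.erase i, (t : ℕ) < (i : ℕ) := by
      intro t ht
      have h1 := hgt t ht
      have h2 : (t : ℕ) ≠ (i : ℕ) := fun hc => (Finset.mem_erase.mp ht).1 (Fin.ext hc)
      omega
    by_cases hiS : i ∈ S
    · rw [if_pos hiS, coeff_eq_expect, coeff_eq_expect]
      have hsplit : ∀ x, (h x * B.phi i x) * B.phiS S x
          = (h x * B.phiS (S.erase i) x) * (B.phi i x) ^ 2 := by
        intro x
        unfold ChainBN.phiS
        rw [← Finset.mul_prod_erase S _ hiS]
        ring
      calc B.expect (fun x => (h x * B.phi i x) * B.phiS S x)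
          = B.expect (fun x => (h x * B.phiS (S.erase i) x) * (B.phi i x) ^ 2) := by
            unfold ChainBN.expect
            exact Finset.sum_congr rfl fun x _ => by dsimp only; rw [hsplit x]
        _ = B.expect (fun x => h x * B.phiS (S.erase i) x) := by
            apply expect_mul_phi_sq
            exact hh.mul (dependsOn_phiS B _ hlt)
    · rw [if_neg hiS]
      have hSe : S.erase i = S := Finset.erase_eq_of_notMem hiS
      rw [coeff_eq_expect]
      have : ∀ x, (h x * B.phi i x) * B.phiS S x = (h x * B.phiS S x) * B.phi i x := by
        intro x; ring
      calc B.expect (fun x => (h x * B.phi i x) * B.phiS S x)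
          = B.expect (fun x => (h x * B.phiS S x) * B.phi i x) := by
            unfold ChainBN.expect
            exact Finset.sum_congr rfl fun x _ => by dsimp only; rw [this x]
        _ = 0 := by
            apply expect_mul_phi
            apply hh.mul (dependsOn_phiS B _ ?_)
            rw [hSe] at hlt
            exact hlt

end ChainAux
namespace ChainAux
open ChainBN
variable {n : ℕ}

/-! ### L1 lemmas -/

lemma L1_mul_phi_le (B : ChainBN n) (h : (Fin n → Bool) → ℝ) (i : Fin n)
    (hh : DependsOn h (i : ℕ)) :
    B.L1 (fun x => h x * B.phi i x) ≤ B.L1 h := by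
  unfold ChainBN.L1
  have key : ∀ S : Finset (Fin n),
      |B.coeff (fun x => h x * B.phi i x) S|
        = if i ∈ S then |B.coeff h (S.erase i)| else 0 := by
    intro S
    rw [coeff_mul_phi B h i hh S]
    by_cases hiS : i ∈ S
    · rw [if_pos hiS, if_pos hiS]
    · rw [if_neg hiS, if_neg hiS, abs_zero]
  calc ∑ S : Finset (Fin n), |B.coeff (fun x => h x * B.phi i x) S|
      = ∑ S : Finset (Fin n), (if i ∈ S then |B.coeff h (S.erase i)| else 0) :=
        Finset.sum_congr rfl fun S _ => key S
    _ = ∑ S ∈ Finset.univ.filter (fun S : Finset (Fin n) => i ∈ S), |B.coeff h (S.erase i)| :=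
        (Finset.sum_filter _ _).symm
    _ = ∑ S ∈ Finset.univ.filter (fun S : Finset (Fin n) => i ∉ S), |B.coeff h S| := by
        apply Finset.sum_nbij' (fun S => S.erase i) (fun S => insert i S)
        · intro S hS
          simp only [Finset.mem_filter, Finset.mem_univ, true_and] at hS ⊢
          exact Finset.notMem_erase i S
        · intro S hS
          simp only [Finset.mem_filter, Finset.mem_univ, true_and] at hS ⊢
          exact Finset.mem_insert_self i S
        · intro S hS
          simp only [Finset.mem_filter, Finset.mem_univ, true_and] at hS
          exact Finset.insert_erase hS
        · intro S hS
          simp only [Finset.mem_filter, Finset.mem_univ, true_and] at hS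
          exact Finset.erase_insert hS
        · intro S _; rfl
    _ ≤ ∑ S : Finset (Fin n), |B.coeff h S| := by
        apply Finset.sum_le_sum_of_subset_of_nonneg (Finset.filter_subset _ _)
        intro S _ _
        exact abs_nonneg _

lemma coeff_decomp4 (B : ChainBN n) (f g1 g2 g3 g4 : (Fin n → Bool) → ℝ)
    (a1 a2 a3 a4 : ℝ)
    (hf : ∀ x, f x = a1 * g1 x + a2 * g2 x + a3 * g3 x + a4 * g4 x)
    (S : Finset (Fin n)) :
    B.coeff f S = a1 * B.coeff g1 S + a2 * B.coeff g2 S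
      + a3 * B.coeff g3 S + a4 * B.coeff g4 S := by
  unfold ChainBN.coeff ChainBN.expect
  rw [Finset.mul_sum, Finset.mul_sum, Finset.mul_sum, Finset.mul_sum,
    ← Finset.sum_add_distrib, ← Finset.sum_add_distrib, ← Finset.sum_add_distrib]
  refine Finset.sum_congr rfl fun x _ => ?_
  dsimp only
  rw [hf x]
  ring

lemma L1_decomp4 (B : ChainBN n) (f g1 g2 g3 g4 : (Fin n → Bool) → ℝ)
    (a1 a2 a3 a4 : ℝ)
    (hf : ∀ x, f x = a1 * g1 x + a2 * g2 x + a3 * g3 x + a4 * g4 x) :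
    B.L1 f ≤ |a1| * B.L1 g1 + |a2| * B.L1 g2 + |a3| * B.L1 g3 + |a4| * B.L1 g4 := by
  unfold ChainBN.L1
  rw [Finset.mul_sum, Finset.mul_sum, Finset.mul_sum, Finset.mul_sum,
    ← Finset.sum_add_distrib, ← Finset.sum_add_distrib, ← Finset.sum_add_distrib]
  apply Finset.sum_le_sum
  intro S _
  rw [coeff_decomp4 B f g1 g2 g3 g4 a1 a2 a3 a4 hf S]
  calc |a1 * B.coeff g1 S + a2 * B.coeff g2 S + a3 * B.coeff g3 S + a4 * B.coeff g4 S|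
      ≤ |a1 * B.coeff g1 S + a2 * B.coeff g2 S + a3 * B.coeff g3 S| + |a4 * B.coeff g4 S| :=
        abs_add_le _ _
    _ ≤ (|a1 * B.coeff g1 S + a2 * B.coeff g2 S| + |a3 * B.coeff g3 S|) + |a4 * B.coeff g4 S| := by
        gcongr; exact abs_add_le _ _
    _ ≤ ((|a1 * B.coeff g1 S| + |a2 * B.coeff g2 S|) + |a3 * B.coeff g3 S|) + |a4 * B.coeff g4 S| := by
        gcongr; exact abs_add_le _ _
    _ = |a1| * |B.coeff g1 S| + |a2| * |B.coeff g2 S|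
        + |a3| * |B.coeff g3 S| + |a4| * |B.coeff g4 S| := by
        rw [abs_mul, abs_mul, abs_mul, abs_mul]

lemma L1_zero (B : ChainBN n) (f : (Fin n → Bool) → ℝ) (hf : ∀ x, f x = 0) :
    B.L1 f = 0 := by
  unfold ChainBN.L1
  apply Finset.sum_eq_zero
  intro S _
  have : B.coeff f S = 0 := by
    unfold ChainBN.coeff ChainBN.expect
    apply Finset.sum_eq_zero
    intro x _
    dsimp only
    rw [hf x]
    ring
  rw [this, abs_zero]

lemma sum_prob (B : ChainBN n) : ∑ x, B.prob x = 1 := by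
  have h1 : ∀ x : Fin n → Bool, B.prob x = B.prob x * (fun _ => (1:ℝ)) x := by
    intro x; simp
  calc ∑ x, B.prob x = B.expect (fun _ => 1) := Finset.sum_congr rfl fun x _ => h1 x
    _ = ∑ x : Fin n → Bool, probUpTo B 0 x * 1 :=
        expect_eq_probUpTo B _ 0 (dependsOn_const 1 0) (Nat.zero_le n)
    _ = ∑ _x : Fin n → Bool, (1/2 : ℝ) ^ n := by
        refine Finset.sum_congr rfl fun x _ => ?_
        rw [mul_one]
        unfold probUpTo
        rw [Finset.prod_congr rfl (fun i _ => if_neg (Nat.not_lt_zero _)),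
          Finset.prod_const]
        simp
    _ = 1 := by
        rw [Finset.sum_const, Finset.card_univ]
        have : Fintype.card (Fin n → Bool) = 2 ^ n := by
          rw [Fintype.card_fun]
          simp
        rw [this, nsmul_eq_mul]
        push_cast
        rw [← mul_pow]
        norm_num

lemma L1_one (B : ChainBN n) : B.L1 (fun _ => (1:ℝ)) = 1 := by
  unfold ChainBN.L1
  have hco : ∀ S : Finset (Fin n), B.coeff (fun _ => 1) S = if S = ∅ then 1 else 0 := by
    intro S
    by_cases hS : S = ∅
    · subst hS
      rw [if_pos rfl]
      unfold ChainBN.coeff ChainBN.expect ChainBN.phiS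
      simp only [Finset.prod_empty, one_mul, mul_one]
      exact sum_prob B
    · rw [if_neg hS]
      obtain ⟨j, hj⟩ := Finset.nonempty_iff_ne_empty.mpr hS
      exact coeff_eq_zero B _ (dependsOn_const 1 0) hj (Nat.zero_le _)
  calc ∑ S : Finset (Fin n), |B.coeff (fun _ => 1) S|
      = ∑ S : Finset (Fin n), (if S = ∅ then 1 else 0) := by
        refine Finset.sum_congr rfl fun S _ => ?_
        rw [hco S]
        by_cases hS : S = ∅ <;> simp [hS]
    _ = 1 := by
        rw [Finset.sum_ite_eq' Finset.univ ∅ (fun _ => (1:ℝ))]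
        simp

end ChainAux
namespace ChainAux
open ChainBN
variable {n : ℕ}

lemma L1_nonneg (B : ChainBN n) (f : (Fin n → Bool) → ℝ) : 0 ≤ B.L1 f :=
  Finset.sum_nonneg fun _ _ => abs_nonneg _

lemma b2r_idem (b : Bool) : b2r b * b2r b = b2r b := by cases b <;> simp [b2r]

lemma b2r_kill (b : Bool) : b2r b * (1 - b2r b) = 0 := by cases b <;> simp [b2r]

lemma conj_erase_pos {T0 T1 : Finset (Fin n)} {i : Fin n} (h : i ∈ T1) (x : Fin n → Bool) :
    conj T0 T1 x = b2r (x i) * conj T0 (T1.erase i) x := by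
  unfold conj; rw [← Finset.mul_prod_erase T1 _ h]; ring

lemma conj_erase_neg {T0 T1 : Finset (Fin n)} {i : Fin n} (h : i ∈ T0) (x : Fin n → Bool) :
    conj T0 T1 x = (1 - b2r (x i)) * conj (T0.erase i) T1 x := by
  unfold conj; rw [← Finset.mul_prod_erase T0 _ h]; ring

lemma conj_insert_pos {T0 T1 : Finset (Fin n)} {k : Fin n} (h : k ∉ T1) (x : Fin n → Bool) :
    conj T0 (insert k T1) x = b2r (x k) * conj T0 T1 x := by
  unfold conj; rw [Finset.prod_insert h]; ring

lemma conj_absorb {T0 T1 : Finset (Fin n)} {p : Fin n} (h1 : p ∈ T1) (x : Fin n → Bool) :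
    b2r (x p) * conj T0 T1 x = conj T0 T1 x := by
  conv_lhs => rw [conj_erase_pos h1 x]
  rw [← mul_assoc, b2r_idem, ← conj_erase_pos h1 x]

lemma conj_kill {T0 T1 : Finset (Fin n)} {p : Fin n} (h0 : p ∈ T0) (x : Fin n → Bool) :
    b2r (x p) * conj T0 T1 x = 0 := by
  rw [conj_erase_neg h0 x, ← mul_assoc, b2r_kill, zero_mul]

/-- The single-literal decomposition over the BN basis. -/
lemma literal_decomp (B : ChainBN n) (k : Fin n) (g : (Fin n → Bool) → ℝ) (x : Fin n → Bool) :
    b2r (x k) * g x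
      = B.cond k false * g x
        + (B.cond k true - B.cond k false) * (b2r (parentVal x k) * g x)
        + B.sigma k false * (g x * B.phi k x)
        + (B.sigma k true - B.sigma k false) * ((b2r (parentVal x k) * g x) * B.phi k x) := by
  have hσ : B.sigma k (parentVal x k) ≠ 0 := ne_of_gt (sigma_pos B k (parentVal x k))
  have hb : b2r (x k) = B.cond k (parentVal x k)
      + B.sigma k (parentVal x k) * B.phi k x := by
    unfold ChainBN.phi
    field_simp
    ring
  have hμ : B.cond k (parentVal x k)
      = B.cond k false + (B.cond k true - B.cond k false) * b2r (parentVal x k) := by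
    cases h : parentVal x k <;> simp [b2r] <;> ring
  have hσ' : B.sigma k (parentVal x k)
      = B.sigma k false + (B.sigma k true - B.sigma k false) * b2r (parentVal x k) := by
    cases h : parentVal x k <;> simp [b2r] <;> ring
  rw [hb, hμ, hσ']
  ring

lemma dependsOn_parent_mul (B : ChainBN n) (k : Fin n) (g : (Fin n → Bool) → ℝ)
    (hg : DependsOn g (k : ℕ)) :
    DependsOn (fun x => b2r (parentVal x k) * g x) (k : ℕ) := by
  intro x y hxy
  dsimp only
  rw [hg x y hxy]
  congr 2
  unfold parentVal
  split
  · rfl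
  · exact hxy _ (by simp; omega)

/-- Uniform bound for the "parent-times-conjunction" auxiliary function. -/
lemma Y_bound (B : ChainBN n) {C r : ℝ} (hC1 : 1 ≤ C) (hr0 : 0 ≤ r) (i : Fin n)
    (T0 T1 : Finset (Fin n))
    (hlt : ∀ t ∈ T0 ∪ T1, (t : ℕ) < (i : ℕ))
    (hg : B.L1 (conj T0 T1) ≤ r ^ (T0 ∪ T1).card)
    (hQ : ∀ p : Fin n, (p : ℕ) < (i : ℕ) → (∀ t ∈ T0 ∪ T1, (t : ℕ) < (p : ℕ)) →
      B.L1 (conj T0 (insert p T1)) ≤ C * r ^ (T0 ∪ T1).card) :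
    B.L1 (fun x => b2r (parentVal x i) * conj T0 T1 x) ≤ C * r ^ (T0 ∪ T1).card := by
  have hpow : (0:ℝ) ≤ r ^ (T0 ∪ T1).card := pow_nonneg hr0 _
  have hCpow : (0:ℝ) ≤ C * r ^ (T0 ∪ T1).card := by nlinarith
  by_cases hi0 : (i : ℕ) = 0
  · have hz : ∀ x, b2r (parentVal x i) * conj T0 T1 x = 0 := by
      intro x
      unfold parentVal
      rw [if_pos hi0]
      simp [b2r]
    rw [L1_zero B _ hz]
    exact hCpow
  · set p : Fin n := ⟨(i : ℕ) - 1, lt_trans (by omega) i.isLt⟩ with hp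
    have hpi : (p : ℕ) < (i : ℕ) := by simp [hp]; omega
    have hpv : ∀ x, parentVal x i = x p := by
      intro x
      unfold parentVal
      rw [if_neg hi0]
    by_cases hpT0 : p ∈ T0
    · have hz : ∀ x, b2r (parentVal x i) * conj T0 T1 x = 0 := by
        intro x
        rw [hpv x]
        exact conj_kill hpT0 x
      rw [L1_zero B _ hz]
      exact hCpow
    · by_cases hpT1 : p ∈ T1
      · have hz : (fun x => b2r (parentVal x i) * conj T0 T1 x) = conj T0 T1 := by
          funext x
          rw [hpv x]
          exact conj_absorb hpT1 x
        rw [hz]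
        calc B.L1 (conj T0 T1) ≤ r ^ (T0 ∪ T1).card := hg
          _ ≤ C * r ^ (T0 ∪ T1).card := by nlinarith
      · have hz : (fun x => b2r (parentVal x i) * conj T0 T1 x) = conj T0 (insert p T1) := by
          funext x
          rw [hpv x]
          exact (conj_insert_pos hpT1 x).symm
        rw [hz]
        apply hQ p hpi
        intro t ht
        have h1 := hlt t ht
        have h2 : t ≠ p := by
          intro h
          subst h
          rcases Finset.mem_union.mp ht with h | h
          · exact hpT0 h
          · exact hpT1 h
        have h3 : (t : ℕ) ≠ (p : ℕ) := fun hc => h2 (Fin.ext hc)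
        have hpval : (p : ℕ) = (i : ℕ) - 1 := rfl
        omega

end ChainAux
namespace ChainAux
open ChainBN
variable {n : ℕ}

/-- Combining the four pieces of a literal decomposition. -/
lemma combine (B : ChainBN n) {α β G Z : ℝ} (i : Fin n)
    (f g Y : (Fin n → Bool) → ℝ)
    (hgdep : DependsOn g (i : ℕ)) (hYdep : DependsOn Y (i : ℕ))
    {a1 a2 a3 a4 : ℝ}
    (hdec : ∀ x, f x = a1 * g x + a2 * Y x + a3 * (g x * B.phi i x)
      + a4 * (Y x * B.phi i x))
    (ha1 : |a1| + |a3| ≤ α) (ha2 : |a2| + |a4| ≤ β)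
    (hg : B.L1 g ≤ G) (hY : B.L1 Y ≤ Z) (hβ0 : 0 ≤ β) :
    B.L1 f ≤ α * G + β * Z := by
  have hL := L1_decomp4 B f g Y (fun x => g x * B.phi i x) (fun x => Y x * B.phi i x)
    a1 a2 a3 a4 hdec
  have h3 := L1_mul_phi_le B g i hgdep
  have h4 := L1_mul_phi_le B Y i hYdep
  have e1 : |a1| * B.L1 g + |a2| * B.L1 Y + |a3| * B.L1 (fun x => g x * B.phi i x)
      + |a4| * B.L1 (fun x => Y x * B.phi i x)
      ≤ (|a1| + |a3|) * B.L1 g + (|a2| + |a4|) * B.L1 Y := by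
    nlinarith [abs_nonneg a3, abs_nonneg a4, h3, h4]
  have hα0 : (0:ℝ) ≤ α := le_trans (by positivity) ha1
  have e2 : (|a1| + |a3|) * B.L1 g ≤ α * G :=
    mul_le_mul ha1 hg (L1_nonneg _ _) hα0
  have e3 : (|a2| + |a4|) * B.L1 Y ≤ β * Z :=
    mul_le_mul ha2 hY (L1_nonneg _ _) hβ0
  linarith

/-- The main induction. -/
lemma main_ind (B : ChainBN n) (α β C r : ℝ)
    (hα1 : ∀ i : Fin n, B.cond i false + B.sigma i false ≤ α)
    (hα2 : ∀ i : Fin n, (1 - B.cond i false) + B.sigma i false ≤ α)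
    (hβ : ∀ i : Fin n, |B.cond i true - B.cond i false|
      + |B.sigma i true - B.sigma i false| ≤ β)
    (hβ0 : 0 ≤ β) (hC1 : 1 ≤ C) (hαC : α ≤ C) (hr1 : 1 ≤ r)
    (hrec1 : α + β * C ≤ r) (hrec2 : α + β * C ≤ C) :
    ∀ N : ℕ,
      (∀ T0 T1 : Finset (Fin n), Disjoint T0 T1 →
        (∀ t ∈ T0 ∪ T1, (t : ℕ) < N) →
        B.L1 (conj T0 T1) ≤ r ^ (T0 ∪ T1).card)
      ∧ (∀ k : Fin n, (k : ℕ) < N → ∀ T0 T1 : Finset (Fin n), Disjoint T0 T1 →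
        (∀ t ∈ T0 ∪ T1, (t : ℕ) < (k : ℕ)) →
        B.L1 (conj T0 (insert k T1)) ≤ C * r ^ (T0 ∪ T1).card) := by
  have hr0 : (0:ℝ) ≤ r := le_trans zero_le_one hr1
  have hC0 : (0:ℝ) ≤ C := le_trans zero_le_one hC1
  intro N
  induction N using Nat.strong_induction_on with
  | _ N IH =>
  constructor
  · -- part (a)
    intro T0 T1 hdisj hlt
    by_cases hne : T0 ∪ T1 = ∅
    · have h0 : T0 = ∅ := Finset.union_eq_empty.mp hne |>.1
      have h1 : T1 = ∅ := Finset.union_eq_empty.mp hne |>.2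
      subst h0; subst h1
      have : conj (∅ : Finset (Fin n)) ∅ = fun _ => (1:ℝ) := by
        funext x; simp [conj]
      rw [this, L1_one B]
      simp
    · have hUne : (T0 ∪ T1).Nonempty := Finset.nonempty_iff_ne_empty.mpr hne
      set i := (T0 ∪ T1).max' hUne with hidef
      have hiU : i ∈ T0 ∪ T1 := Finset.max'_mem _ _
      have hiN : (i : ℕ) < N := hlt i hiU
      -- the two recursive facts we shall feed to `Y_bound`
      rcases Finset.mem_union.mp hiU with hiT0 | hiT1
      · -- negative literal at the top
        have hiT1 : i ∉ T1 := Finset.disjoint_left.mp hdisj hiT0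
        set T0' := T0.erase i with hT0'
        have hU' : T0' ∪ T1 = (T0 ∪ T1).erase i := by
          rw [Finset.erase_union_distrib, Finset.erase_eq_of_notMem hiT1]
        have hlt' : ∀ t ∈ T0' ∪ T1, (t : ℕ) < (i : ℕ) := by
          intro t ht
          rw [hU'] at ht
          have h1 := (Finset.mem_erase.mp ht).1
          have h2 := (T0 ∪ T1).le_max' t (Finset.mem_erase.mp ht).2
          have : (t : ℕ) ≠ (i : ℕ) := fun hc => h1 (Fin.ext hc)
          have : (t : ℕ) ≤ (i : ℕ) := by exact_mod_cast h2
          omega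
        have hdisj' : Disjoint T0' T1 := Finset.disjoint_of_subset_left (Finset.erase_subset _ _) hdisj
        have hcard : (T0 ∪ T1).card = (T0' ∪ T1).card + 1 := by
          rw [hU', Finset.card_erase_of_mem hiU]
          have := Finset.card_pos.mpr hUne
          omega
        have hltI : ∀ t ∈ T0' ∪ T1, (t : ℕ) < (i : ℕ) := hlt'
        have hgL : B.L1 (conj T0' T1) ≤ r ^ (T0' ∪ T1).card :=
          (IH (i : ℕ) hiN).1 T0' T1 hdisj' hlt'
        have hQ : ∀ p : Fin n, (p : ℕ) < (i : ℕ) →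
            (∀ t ∈ T0' ∪ T1, (t : ℕ) < (p : ℕ)) →
            B.L1 (conj T0' (insert p T1)) ≤ C * r ^ (T0' ∪ T1).card := by
          intro p hp hplt
          exact (IH (i : ℕ) hiN).2 p hp T0' T1 hdisj' hplt
        have hYb := Y_bound B hC1 hr0 i T0' T1 hltI hgL hQ
        have hgdep : DependsOn (conj T0' T1) (i : ℕ) :=
          dependsOn_conj T0' T1 (fun t ht => hlt' t (Finset.mem_union_left _ ht))
            (fun t ht => hlt' t (Finset.mem_union_right _ ht))
        have hYdep : DependsOn (fun x => b2r (parentVal x i) * conj T0' T1 x) (i : ℕ) :=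
          dependsOn_parent_mul B i _ hgdep
        have hdec : ∀ x, conj T0 T1 x
            = (1 - B.cond i false) * conj T0' T1 x
              + (-(B.cond i true - B.cond i false)) * (b2r (parentVal x i) * conj T0' T1 x)
              + (-(B.sigma i false)) * (conj T0' T1 x * B.phi i x)
              + (-(B.sigma i true - B.sigma i false))
                  * ((b2r (parentVal x i) * conj T0' T1 x) * B.phi i x) := by
          intro x
          rw [conj_erase_neg hiT0 x]
          have h := literal_decomp B i (conj T0' T1) x
          linear_combination -h
        have ha1 : |1 - B.cond i false| + |-(B.sigma i false)| ≤ α := by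
          rw [abs_neg, abs_of_pos (sigma_pos B i false),
            abs_of_pos (by have := B.cond_lt_one i false; linarith)]
          exact hα2 i
        have ha2 : |-(B.cond i true - B.cond i false)|
            + |-(B.sigma i true - B.sigma i false)| ≤ β := by
          rw [abs_neg, abs_neg]; exact hβ i
        have hcomb := combine B i (conj T0 T1) (conj T0' T1) _ hgdep hYdep hdec
          ha1 ha2 hgL hYb hβ0
        calc B.L1 (conj T0 T1)
            ≤ α * r ^ (T0' ∪ T1).card + β * (C * r ^ (T0' ∪ T1).card) := hcomb
          _ ≤ r * r ^ (T0' ∪ T1).card := by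
              have hp : (0:ℝ) ≤ r ^ (T0' ∪ T1).card := pow_nonneg hr0 _
              nlinarith
          _ = r ^ (T0 ∪ T1).card := by rw [hcard, pow_succ]; ring
      · -- positive literal at the top
        have hiT0 : i ∉ T0 := Finset.disjoint_right.mp hdisj hiT1
        set T1' := T1.erase i with hT1'
        have hU' : T0 ∪ T1' = (T0 ∪ T1).erase i := by
          rw [Finset.erase_union_distrib, Finset.erase_eq_of_notMem hiT0]
        have hlt' : ∀ t ∈ T0 ∪ T1', (t : ℕ) < (i : ℕ) := by
          intro t ht
          rw [hU'] at ht
          have h1 := (Finset.mem_erase.mp ht).1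
          have h2 := (T0 ∪ T1).le_max' t (Finset.mem_erase.mp ht).2
          have : (t : ℕ) ≠ (i : ℕ) := fun hc => h1 (Fin.ext hc)
          have : (t : ℕ) ≤ (i : ℕ) := by exact_mod_cast h2
          omega
        have hdisj' : Disjoint T0 T1' := Finset.disjoint_of_subset_right (Finset.erase_subset _ _) hdisj
        have hcard : (T0 ∪ T1).card = (T0 ∪ T1').card + 1 := by
          rw [hU', Finset.card_erase_of_mem hiU]
          have := Finset.card_pos.mpr hUne
          omega
        have hgL : B.L1 (conj T0 T1') ≤ r ^ (T0 ∪ T1').card :=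
          (IH (i : ℕ) hiN).1 T0 T1' hdisj' hlt'
        have hQ : ∀ p : Fin n, (p : ℕ) < (i : ℕ) →
            (∀ t ∈ T0 ∪ T1', (t : ℕ) < (p : ℕ)) →
            B.L1 (conj T0 (insert p T1')) ≤ C * r ^ (T0 ∪ T1').card := by
          intro p hp hplt
          exact (IH (i : ℕ) hiN).2 p hp T0 T1' hdisj' hplt
        have hYb := Y_bound B hC1 hr0 i T0 T1' hlt' hgL hQ
        have hgdep : DependsOn (conj T0 T1') (i : ℕ) :=
          dependsOn_conj T0 T1' (fun t ht => hlt' t (Finset.mem_union_left _ ht))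
            (fun t ht => hlt' t (Finset.mem_union_right _ ht))
        have hYdep : DependsOn (fun x => b2r (parentVal x i) * conj T0 T1' x) (i : ℕ) :=
          dependsOn_parent_mul B i _ hgdep
        have hdec : ∀ x, conj T0 T1 x
            = B.cond i false * conj T0 T1' x
              + (B.cond i true - B.cond i false) * (b2r (parentVal x i) * conj T0 T1' x)
              + B.sigma i false * (conj T0 T1' x * B.phi i x)
              + (B.sigma i true - B.sigma i false)
                  * ((b2r (parentVal x i) * conj T0 T1' x) * B.phi i x) := by
          intro x
          rw [conj_erase_pos hiT1 x]
          exact literal_decomp B i (conj T0 T1') x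
        have ha1 : |B.cond i false| + |B.sigma i false| ≤ α := by
          rw [abs_of_pos (sigma_pos B i false), abs_of_pos (B.cond_pos i false)]
          exact hα1 i
        have hcomb := combine B i (conj T0 T1) (conj T0 T1') _ hgdep hYdep hdec
          ha1 (hβ i) hgL hYb hβ0
        calc B.L1 (conj T0 T1)
            ≤ α * r ^ (T0 ∪ T1').card + β * (C * r ^ (T0 ∪ T1').card) := hcomb
          _ ≤ r * r ^ (T0 ∪ T1').card := by
              have hp : (0:ℝ) ≤ r ^ (T0 ∪ T1').card := pow_nonneg hr0 _
              nlinarith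
          _ = r ^ (T0 ∪ T1).card := by rw [hcard, pow_succ]; ring
  · -- part (b)
    intro k hkN T0 T1 hdisj hlt
    have hkT1 : k ∉ T1 := fun h =>
      lt_irrefl ((k : ℕ)) (hlt k (Finset.mem_union_right _ h))
    have hgL : B.L1 (conj T0 T1) ≤ r ^ (T0 ∪ T1).card :=
      (IH (k : ℕ) hkN).1 T0 T1 hdisj hlt
    have hQ : ∀ p : Fin n, (p : ℕ) < (k : ℕ) →
        (∀ t ∈ T0 ∪ T1, (t : ℕ) < (p : ℕ)) →
        B.L1 (conj T0 (insert p T1)) ≤ C * r ^ (T0 ∪ T1).card := by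
      intro p hp hplt
      exact (IH (k : ℕ) hkN).2 p hp T0 T1 hdisj hplt
    have hYb := Y_bound B hC1 hr0 k T0 T1 hlt hgL hQ
    have hgdep : DependsOn (conj T0 T1) (k : ℕ) :=
      dependsOn_conj T0 T1 (fun t ht => hlt t (Finset.mem_union_left _ ht))
        (fun t ht => hlt t (Finset.mem_union_right _ ht))
    have hYdep : DependsOn (fun x => b2r (parentVal x k) * conj T0 T1 x) (k : ℕ) :=
      dependsOn_parent_mul B k _ hgdep
    have hdec : ∀ x, conj T0 (insert k T1) x
        = B.cond k false * conj T0 T1 x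
          + (B.cond k true - B.cond k false) * (b2r (parentVal x k) * conj T0 T1 x)
          + B.sigma k false * (conj T0 T1 x * B.phi k x)
          + (B.sigma k true - B.sigma k false)
              * ((b2r (parentVal x k) * conj T0 T1 x) * B.phi k x) := by
      intro x
      rw [conj_insert_pos hkT1 x]
      exact literal_decomp B k (conj T0 T1) x
    have ha1 : |B.cond k false| + |B.sigma k false| ≤ α := by
      rw [abs_of_pos (sigma_pos B k false), abs_of_pos (B.cond_pos k false)]
      exact hα1 k
    have hcomb := combine B k (conj T0 (insert k T1)) (conj T0 T1) _ hgdep hYdep hdec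
      ha1 (hβ k) hgL hYb hβ0
    calc B.L1 (conj T0 (insert k T1))
        ≤ α * r ^ (T0 ∪ T1).card + β * (C * r ^ (T0 ∪ T1).card) := hcomb
      _ ≤ C * r ^ (T0 ∪ T1).card := by
          have hp : (0:ℝ) ≤ r ^ (T0 ∪ T1).card := pow_nonneg hr0 _
          nlinarith

end ChainAux

namespace ChainAux
open ChainBN
variable {n : ℕ}

lemma sigma_le_half (B : ChainBN n) (i : Fin n) (b : Bool) : B.sigma i b ≤ 1/2 := by
  have h1 := B.cond_pos i b
  have h2 := B.cond_lt_one i b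
  have h3 : B.cond i b * (1 - B.cond i b) ≤ 1/4 := by
    nlinarith [sq_nonneg (B.cond i b - 1/2)]
  calc B.sigma i b ≤ Real.sqrt (1/4) := Real.sqrt_le_sqrt h3
    _ = 1/2 := by
        rw [show (1/4:ℝ) = (1/2)^2 by norm_num, Real.sqrt_sq (by norm_num)]

lemma sig_diff_sq (B : ChainBN n) (i : Fin n) :
    (B.sigma i true - B.sigma i false) ^ 2
      ≤ |B.cond i true - B.cond i false| * |1 - B.cond i true - B.cond i false| := by
  set a := B.sigma i true with ha
  set b := B.sigma i false with hb
  have ha0 : 0 ≤ a := Real.sqrt_nonneg _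
  have hb0 : 0 ≤ b := Real.sqrt_nonneg _
  have ha2 : a ^ 2 = B.cond i true * (1 - B.cond i true) := sigma_sq B i true
  have hb2 : b ^ 2 = B.cond i false * (1 - B.cond i false) := sigma_sq B i false
  have h1 : |a - b| ≤ a + b := abs_le.mpr ⟨by linarith, by linarith⟩
  have h2 : (a - b) ^ 2 ≤ |a ^ 2 - b ^ 2| := by
    have e : (a - b) ^ 2 = |a - b| * |a - b| := by
      rw [abs_mul_abs_self (a - b)]; ring
    rw [e]
    calc |a - b| * |a - b| ≤ |a - b| * (a + b) :=
          mul_le_mul_of_nonneg_left h1 (abs_nonneg _)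
      _ = |a - b| * |a + b| := by rw [abs_of_nonneg (by linarith : (0:ℝ) ≤ a + b)]
      _ = |(a - b) * (a + b)| := (abs_mul _ _).symm
      _ = |a ^ 2 - b ^ 2| := by ring_nf
  have h3 : a ^ 2 - b ^ 2
      = (B.cond i true - B.cond i false) * (1 - B.cond i true - B.cond i false) := by
    rw [ha2, hb2]; ring
  calc (a - b) ^ 2 ≤ |a ^ 2 - b ^ 2| := h2
    _ = |B.cond i true - B.cond i false| * |1 - B.cond i true - B.cond i false| := by
        rw [h3, abs_mul]

lemma abs_le_of_sq_le' {x b : ℝ} (hb : 0 ≤ b) (h : x ^ 2 ≤ b ^ 2) : |x| ≤ b := by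
  nlinarith [abs_nonneg x, sq_abs x]

/-- numeric inequality, small-`ε` case -/
lemma num1 (c : ℝ) (hc0 : 0 < c) (hc : c < 1/2) (hε : 1 - 2*c ≤ 1/10) :
    3/2 - c ≤ (1 - ((1 - 2*c) + (1 - 2*c))) * (3 * (1 - c)) := by
  nlinarith [sq_nonneg (1 - 2*c), mul_nonneg (by linarith : (0:ℝ) ≤ 1 - 2*c)
    (by linarith : (0:ℝ) ≤ 1/10 - (1 - 2*c))]

/-- numeric inequality, large-`ε` case -/
lemma num2 (c s : ℝ) (hc0 : 0 < c) (hc : c < 1/2) (h1 : 1 - 2*c = 10 * s^2)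
    (hs0 : 0 ≤ s) (hs13 : s ≤ 1/3) :
    3/2 - c ≤ (1 - (1/10 + s)) * (3 * (1 - c)) := by
  nlinarith [sq_nonneg (s - 3/14), mul_nonneg (sq_nonneg s) (by linarith : (0:ℝ) ≤ 1/3 - s),
    mul_nonneg hs0 (sq_nonneg s)]

end ChainAux


set_option maxHeartbeats 1000000 in
open ChainAux in
/-- strong conditions. If the chain is `c`-bounded for
`c ∈ (0,1/2)` and `|μ_{i,1} − μ_{i,0}| ≤ 0.1` for all `i`, then
`|σ_{i,1} − σ_{i,0}| ≤ 0.4` for all `i` (so `D_μ + D_σ ≤ 0.5`), and every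
conjunction with `d` literals satisfies `L1(f) ≤ (3(1−c))^d`. -/
theorem chain_L1_bound_strong {n : ℕ} (B : ChainBN n) (c : ℝ)
    (hc0 : 0 < c) (hc : c < 1 / 2)
    (hbound : ∀ i b, c ≤ B.cond i b ∧ B.cond i b ≤ 1 - c)
    (hDμ : ∀ i, |B.cond i true - B.cond i false| ≤ 0.1)
    (T0 T1 : Finset (Fin n)) (hdisj : Disjoint T0 T1)
    (d : ℕ) (hd : (T0 ∪ T1).card = d) :
    (∀ i, |B.sigma i true - B.sigma i false| ≤ 0.4) ∧
    B.L1 (conj T0 T1) ≤ (3 * (1 - c)) ^ d := by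
  have hDμ' : ∀ i, |B.cond i true - B.cond i false| ≤ 1/10 := by
    intro i; have := hDμ i; norm_num at this ⊢; linarith
  -- Part 1
  have part1 : ∀ i, |B.sigma i true - B.sigma i false| ≤ 0.4 := by
    intro i
    have h1 := sig_diff_sq B i
    have h2 : |1 - B.cond i true - B.cond i false| ≤ 1 := by
      have ht := B.cond_pos i true
      have hf := B.cond_pos i false
      have ht1 := B.cond_lt_one i true
      have hf1 := B.cond_lt_one i false
      rw [abs_le]
      constructor <;> linarith
    have h3 : (B.sigma i true - B.sigma i false) ^ 2 ≤ (2/5)^2 := by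
      calc (B.sigma i true - B.sigma i false) ^ 2
          ≤ |B.cond i true - B.cond i false| * |1 - B.cond i true - B.cond i false| := h1
        _ ≤ (1/10) * 1 := mul_le_mul (hDμ' i) h2 (abs_nonneg _) (by norm_num)
        _ ≤ (2/5)^2 := by norm_num
    have := abs_le_of_sq_le' (by norm_num : (0:ℝ) ≤ 2/5) h3
    calc |B.sigma i true - B.sigma i false| ≤ 2/5 := this
      _ ≤ 0.4 := by norm_num
  refine ⟨part1, ?_⟩
  -- constants
  have hε0 : (0:ℝ) < 1 - 2*c := by linarith
  have hε1 : (1:ℝ) - 2*c < 1 := by linarith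
  have hm0 : (0:ℝ) < min (1/10) (1 - 2*c) := lt_min (by norm_num) hε0
  have hm1 : min (1/10) (1 - 2*c) ≤ 1/10 := min_le_left _ _
  have hmε : min (1/10) (1 - 2*c) ≤ 1 - 2*c := min_le_right _ _
  have hs0 : (0:ℝ) ≤ Real.sqrt (min (1/10) (1 - 2*c) * (1 - 2*c)) := Real.sqrt_nonneg _
  have hs2 : Real.sqrt (min (1/10) (1 - 2*c) * (1 - 2*c)) ^ 2
      = min (1/10) (1 - 2*c) * (1 - 2*c) := Real.sq_sqrt (by positivity)
  have hsq110 : Real.sqrt (min (1/10) (1 - 2*c) * (1 - 2*c)) ^ 2 ≤ 1/10 := by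
    rw [hs2]
    nlinarith
  have hs25 : Real.sqrt (min (1/10) (1 - 2*c) * (1 - 2*c)) ≤ 2/5 := by
    nlinarith
  set s : ℝ := Real.sqrt (min (1/10) (1 - 2*c) * (1 - 2*c)) with hsdef
  have hβ0 : (0:ℝ) ≤ min (1/10) (1 - 2*c) + s := by linarith
  have hβhalf : min (1/10) (1 - 2*c) + s ≤ 1/2 := by linarith
  have h1β : (0:ℝ) < 1 - (min (1/10) (1 - 2*c) + s) := by linarith
  have hα1' : (1:ℝ) < 3/2 - c := by linarith
  have hr1 : (1:ℝ) ≤ 3 * (1 - c) := by linarith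
  have hC1 : (1:ℝ) ≤ (3/2 - c) / (1 - (min (1/10) (1 - 2*c) + s)) := by
    rw [le_div_iff₀ h1β]
    linarith
  have hαC : (3/2 - c) ≤ (3/2 - c) / (1 - (min (1/10) (1 - 2*c) + s)) := by
    rw [le_div_iff₀ h1β]
    nlinarith
  have hrec2 : (3/2 - c) + (min (1/10) (1 - 2*c) + s)
        * ((3/2 - c) / (1 - (min (1/10) (1 - 2*c) + s)))
      ≤ (3/2 - c) / (1 - (min (1/10) (1 - 2*c) + s)) := by
    have : (3/2 - c) + (min (1/10) (1 - 2*c) + s)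
        * ((3/2 - c) / (1 - (min (1/10) (1 - 2*c) + s)))
        = (3/2 - c) / (1 - (min (1/10) (1 - 2*c) + s)) := by
      field_simp
      ring
    linarith
  have hkey : (3/2 - c) ≤ (1 - (min (1/10) (1 - 2*c) + s)) * (3 * (1 - c)) := by
    rcases le_or_gt (1 - 2*c) (1/10) with hcase | hcase
    · have hmeq : min (1/10) (1 - 2*c) = 1 - 2*c := min_eq_right hcase
      have hseq : s = 1 - 2*c := by
        rw [hsdef, hmeq, ← sq, Real.sqrt_sq hε0.le]
      rw [hmeq, hseq]
      exact num1 c hc0 hc hcase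
    · have hmeq : min (1/10) (1 - 2*c) = 1/10 := min_eq_left hcase.le
      have hεs : 1 - 2*c = 10 * s^2 := by rw [hs2, hmeq]; ring
      have hs13 : s ≤ 1/3 := by nlinarith
      rw [hmeq]
      exact num2 c s hc0 hc hεs hs0 hs13
  have hCr : (3/2 - c) / (1 - (min (1/10) (1 - 2*c) + s)) ≤ 3 * (1 - c) := by
    rw [div_le_iff₀ h1β]
    linarith [hkey]
  have hrec1 : (3/2 - c) + (min (1/10) (1 - 2*c) + s)
        * ((3/2 - c) / (1 - (min (1/10) (1 - 2*c) + s)))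
      ≤ 3 * (1 - c) := le_trans hrec2 hCr
  -- per-node hypotheses
  have hα1 : ∀ i : Fin n, B.cond i false + B.sigma i false ≤ 3/2 - c := by
    intro i
    have h1 := (hbound i false).2
    have h2 := sigma_le_half B i false
    linarith
  have hα2 : ∀ i : Fin n, (1 - B.cond i false) + B.sigma i false ≤ 3/2 - c := by
    intro i
    have h1 := (hbound i false).1
    have h2 := sigma_le_half B i false
    linarith
  have hβi : ∀ i : Fin n, |B.cond i true - B.cond i false|
      + |B.sigma i true - B.sigma i false| ≤ min (1/10) (1 - 2*c) + s := by
    intro i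
    have hμm : |B.cond i true - B.cond i false| ≤ min (1/10) (1 - 2*c) := by
      apply le_min (hDμ' i)
      have h1 := (hbound i true).1
      have h2 := (hbound i true).2
      have h3 := (hbound i false).1
      have h4 := (hbound i false).2
      rw [abs_le]
      constructor <;> linarith
    have hσs : |B.sigma i true - B.sigma i false| ≤ s := by
      have h1 := sig_diff_sq B i
      have h2 : |1 - B.cond i true - B.cond i false| ≤ 1 - 2*c := by
        have ha := (hbound i true).1
        have hb := (hbound i true).2
        have hc' := (hbound i false).1
        have hd' := (hbound i false).2
        rw [abs_le]
        constructor <;> linarith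
      have h3 : (B.sigma i true - B.sigma i false) ^ 2 ≤ s ^ 2 := by
        rw [hs2]
        calc (B.sigma i true - B.sigma i false) ^ 2
            ≤ |B.cond i true - B.cond i false| * |1 - B.cond i true - B.cond i false| := h1
          _ ≤ min (1/10) (1 - 2*c) * (1 - 2*c) := mul_le_mul hμm h2 (abs_nonneg _) hm0.le
      exact abs_le_of_sq_le' hs0 h3
    linarith
  have := (main_ind B (3/2 - c) (min (1/10) (1 - 2*c) + s)
      ((3/2 - c) / (1 - (min (1/10) (1 - 2*c) + s))) (3 * (1 - c))
      hα1 hα2 hβi hβ0 hC1 hαC hr1 hrec1 hrec2 n).1 T0 T1 hdisj (fun t _ => t.isLt)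
  rw [hd] at this
  exact this
end
end

section
/- Let D be a product distribution on {0,1}^n (the BN with empty edge set) with P(X_i = 1) = μ_i ∈ (0,1) and σ_i = √(μ_i(1−μ_i)). Let f be a conjunction with positive literal set T1 and negative literal set T0, d = |T1|+|T0|. Then the spectral norm of f is exactly L1(f) = ∏_{i∈T1}(μ_i+σ_i) · ∏_{j∈T0}((1−μ_j)+σ_j), and consequently L1(f) ≤ 1.21^d. -/
/-!
A product distribution on `{0,1}^n` is a Bayesian network with no edges: the
coordinates are independent with `P(X_i = 1) = μ_i ∈ (0,1)`,
`σ_i = √(μ_i(1−μ_i))`.  The induced Fourier basis is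
`φ_i(x) = (x_i − μ_i)/σ_i`, `φ_S = ∏_{i∈S} φ_i`, with `f̂_S = E_D[f φ_S]` and
spectral norm `L1(f) = Σ_S |f̂_S|`.
-/

open Finset

noncomputable section

/-- A product distribution on `{0,1}^n` (BN with empty edge set). -/
structure ProductBN (n : ℕ) where
  /-- `mu i = P(X_i = 1)` -/
  mu : Fin n → ℝ
  mu_pos : ∀ i, 0 < mu i
  mu_lt_one : ∀ i, mu i < 1

namespace ProductBN

variable {n : ℕ}

/-- The joint probability mass function. -/
def prob (B : ProductBN n) (x : Fin n → Bool) : ℝ :=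
  ∏ i, if x i then B.mu i else 1 - B.mu i

/-- Standard deviation `σ_i = √(μ_i(1−μ_i))`. -/
def sigma (B : ProductBN n) (i : Fin n) : ℝ :=
  Real.sqrt (B.mu i * (1 - B.mu i))

/-- Basis function of a single coordinate. -/
def phi (B : ProductBN n) (i : Fin n) (x : Fin n → Bool) : ℝ :=
  (b2r (x i) - B.mu i) / B.sigma i

/-- Basis function `φ_S = ∏_{i ∈ S} φ_i` (with `φ_∅ ≡ 1`). -/
def phiS (B : ProductBN n) (S : Finset (Fin n)) (x : Fin n → Bool) : ℝ :=
  ∏ i ∈ S, B.phi i x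

/-- Expectation with respect to the product distribution. -/
def expect (B : ProductBN n) (g : (Fin n → Bool) → ℝ) : ℝ :=
  ∑ x, B.prob x * g x

/-- Fourier coefficient `f̂_S = E_D[f(X) φ_S(X)]`. -/
def coeff (B : ProductBN n) (f : (Fin n → Bool) → ℝ) (S : Finset (Fin n)) : ℝ :=
  B.expect fun x => f x * B.phiS S x

/-- Spectral norm `L1(f) = Σ_S |f̂_S|`. -/
def L1 (B : ProductBN n) (f : (Fin n → Bool) → ℝ) : ℝ :=
  ∑ S : Finset (Fin n), |B.coeff f S|

end ProductBN

namespace ProductBN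

variable {n : ℕ} (B : ProductBN n)

lemma mu_mul_pos (i : Fin n) : 0 < B.mu i * (1 - B.mu i) :=
  mul_pos (B.mu_pos i) (by linarith [B.mu_lt_one i])

lemma sigma_pos (i : Fin n) : 0 < B.sigma i :=
  Real.sqrt_pos.2 (B.mu_mul_pos i)

lemma sigma_sq (i : Fin n) : B.sigma i ^ 2 = B.mu i * (1 - B.mu i) :=
  Real.sq_sqrt (B.mu_mul_pos i).le

lemma expect_prod (g : Fin n → Bool → ℝ) :
    B.expect (fun x => ∏ i, g i (x i))
      = ∏ i, (B.mu i * g i true + (1 - B.mu i) * g i false) := by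
  have h : ∀ i : Fin n, B.mu i * g i true + (1 - B.mu i) * g i false
      = ∑ b : Bool, (if b then B.mu i else 1 - B.mu i) * g i b := by
    intro i
    rw [Fintype.sum_bool]
    simp
  simp only [h]
  rw [Finset.prod_univ_sum, Fintype.piFinset_univ]
  unfold expect prob
  refine Finset.sum_congr rfl fun x _ => ?_
  rw [← Finset.prod_mul_distrib]

lemma conj_coeff (T0 T1 : Finset (Fin n)) (hdisj : Disjoint T0 T1) (S : Finset (Fin n)) :
    |B.coeff (conj T0 T1) S| =
      if S ⊆ T0 ∪ T1 then
        (∏ i ∈ S, B.sigma i) *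
          ∏ i ∈ (T0 ∪ T1) \ S, (if i ∈ T1 then B.mu i else 1 - B.mu i)
      else 0 := by
  set g : Fin n → Bool → ℝ := fun i b =>
    (if i ∈ T1 then b2r b else 1) *
    ((if i ∈ T0 then 1 - b2r b else 1) *
     (if i ∈ S then (b2r b - B.mu i) / B.sigma i else 1)) with hg
  set e : Fin n → ℝ := fun i => B.mu i * g i true + (1 - B.mu i) * g i false with heDef
  have hco : B.coeff (conj T0 T1) S = ∏ i, e i := by
    have hfun : (fun x => conj T0 T1 x * B.phiS S x) = fun x => ∏ i, g i (x i) := by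
      funext x
      simp only [hg, Finset.prod_mul_distrib, conj, phiS, phi]
      rw [Finset.prod_ite_mem univ T1, Finset.prod_ite_mem univ T0,
          Finset.prod_ite_mem univ S, Finset.univ_inter, Finset.univ_inter,
          Finset.univ_inter]
      ring
    unfold coeff
    rw [hfun, expect_prod]
  have he : ∀ i : Fin n, e i =
      if i ∈ S then (if i ∈ T1 then B.sigma i else if i ∈ T0 then -B.sigma i else 0)
      else (if i ∈ T1 then B.mu i else if i ∈ T0 then 1 - B.mu i else 1) := by
    intro i
    have hσ := B.sigma_pos i
    have hs2 := B.sigma_sq i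
    by_cases h1 : i ∈ T1
    · have h0 : i ∉ T0 := Finset.disjoint_right.1 hdisj h1
      by_cases hS : i ∈ S
      · simp only [heDef, hg, h1, h0, hS, if_true, if_false, b2r, Bool.false_eq_true]
        field_simp
        nlinarith
      · simp [heDef, hg, h1, h0, hS, b2r]
    · by_cases h0 : i ∈ T0
      · by_cases hS : i ∈ S
        · simp only [heDef, hg, h1, h0, hS, if_true, if_false, b2r, Bool.false_eq_true]
          field_simp
          nlinarith
        · simp [heDef, hg, h1, h0, hS, b2r]
      · by_cases hS : i ∈ S
        · simp only [heDef, hg, h1, h0, hS, if_true, if_false, b2r]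
          simp
          ring
        · simp [heDef, hg, h1, h0, hS, b2r]
  by_cases hsub : S ⊆ T0 ∪ T1
  · rw [if_pos hsub, hco]
    have h1 : (∏ i, e i) = ∏ i ∈ T0 ∪ T1, e i := by
      refine (Finset.prod_subset (Finset.subset_univ _) ?_).symm
      intro i _ hi
      have hiS : i ∉ S := fun h => hi (hsub h)
      have hi1 : i ∉ T1 := fun h => hi (Finset.mem_union_right _ h)
      have hi0 : i ∉ T0 := fun h => hi (Finset.mem_union_left _ h)
      rw [he i, if_neg hiS, if_neg hi1, if_neg hi0]
    rw [h1, ← Finset.prod_sdiff hsub, abs_mul, Finset.abs_prod, Finset.abs_prod]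
    rw [mul_comm]
    congr 1
    · refine Finset.prod_congr rfl fun i hiS => ?_
      have hi01 : i ∈ T0 ∪ T1 := hsub hiS
      rw [he i, if_pos hiS]
      rcases Finset.mem_union.1 hi01 with h0 | h1
      · have h1 : i ∉ T1 := fun h => (Finset.disjoint_left.1 hdisj h0) h
        rw [if_neg h1, if_pos h0, abs_neg, abs_of_pos (B.sigma_pos i)]
      · rw [if_pos h1, abs_of_pos (B.sigma_pos i)]
    · refine Finset.prod_congr rfl fun i hi => ?_
      rw [Finset.mem_sdiff] at hi
      rw [he i, if_neg hi.2]
      rcases Finset.mem_union.1 hi.1 with h0 | h1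
      · have h1 : i ∉ T1 := fun h => (Finset.disjoint_left.1 hdisj h0) h
        rw [if_neg h1, if_neg h1, if_pos h0, abs_of_pos (by linarith [B.mu_lt_one i])]
      · rw [if_pos h1, if_pos h1, abs_of_pos (B.mu_pos i)]
  · rw [if_neg hsub, hco]
    obtain ⟨i, hiS, hi01⟩ := Finset.not_subset.1 hsub
    have hi1 : i ∉ T1 := fun h => hi01 (Finset.mem_union_right _ h)
    have hi0 : i ∉ T0 := fun h => hi01 (Finset.mem_union_left _ h)
    rw [abs_eq_zero]
    refine Finset.prod_eq_zero (Finset.mem_univ i) ?_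
    rw [he i, if_pos hiS, if_neg hi1, if_neg hi0]

end ProductBN

lemma aux_bound (t : ℝ) (h0 : 0 < t) (h1 : t < 1) :
    t + Real.sqrt (t * (1 - t)) ≤ 1.21 := by
  have h : Real.sqrt (t * (1 - t)) ≤ 1.21 - t := by
    have h2 : (1.21 : ℝ) - t = Real.sqrt ((1.21 - t) ^ 2) :=
      (Real.sqrt_sq (by linarith)).symm
    rw [h2]
    exact Real.sqrt_le_sqrt (by nlinarith [sq_nonneg (t - 0.855)])
  linarith

/-- exact spectral norm of conjunctions under product
distributions. For a product distribution and a conjunction with positive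
literals `T1` and negative literals `T0`, `d = |T0 ∪ T1|`,
`L1(f) = ∏_{i∈T1}(μ_i+σ_i) · ∏_{j∈T0}((1−μ_j)+σ_j)`, and hence
`L1(f) ≤ 1.21^d`. -/
theorem product_L1_exact {n : ℕ} (B : ProductBN n)
    (T0 T1 : Finset (Fin n)) (hdisj : Disjoint T0 T1)
    (d : ℕ) (hd : (T0 ∪ T1).card = d) :
    B.L1 (conj T0 T1)
        = (∏ i ∈ T1, (B.mu i + B.sigma i)) * ∏ j ∈ T0, ((1 - B.mu j) + B.sigma j) ∧
    B.L1 (conj T0 T1) ≤ (1.21 : ℝ) ^ d := by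
  have key : B.L1 (conj T0 T1)
      = ∏ i ∈ T0 ∪ T1, (B.sigma i + (if i ∈ T1 then B.mu i else 1 - B.mu i)) := by
    unfold ProductBN.L1
    simp only [B.conj_coeff T0 T1 hdisj]
    rw [← Finset.sum_filter]
    have hfilt : Finset.univ.filter (fun S => S ⊆ T0 ∪ T1) = (T0 ∪ T1).powerset := by
      ext S; simp only [Finset.mem_filter, Finset.mem_powerset, Finset.mem_univ, true_and]
    rw [hfilt, ← Finset.prod_add]
  have hfac : ∀ i ∈ T0 ∪ T1,
      B.sigma i + (if i ∈ T1 then B.mu i else 1 - B.mu i) ≤ 1.21 := by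
    intro i hi
    by_cases h1 : i ∈ T1
    · rw [if_pos h1]
      have := aux_bound (B.mu i) (B.mu_pos i) (B.mu_lt_one i)
      unfold ProductBN.sigma; linarith
    · rw [if_neg h1]
      have := aux_bound (1 - B.mu i) (by linarith [B.mu_lt_one i]) (by linarith [B.mu_pos i])
      unfold ProductBN.sigma
      rw [mul_comm]
      have h2 : (1 : ℝ) - (1 - B.mu i) = B.mu i := by ring
      rw [h2] at this
      linarith
  constructor
  · rw [key, Finset.union_comm, Finset.prod_union hdisj.symm]
    congr 1
    · refine Finset.prod_congr rfl fun i hi => ?_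
      rw [if_pos hi]; ring
    · refine Finset.prod_congr rfl fun i hi => ?_
      have h1 : i ∉ T1 := fun h => (Finset.disjoint_left.1 hdisj hi) h
      rw [if_neg h1]; ring
  · rw [key, ← hd]
    calc ∏ i ∈ T0 ∪ T1, (B.sigma i + (if i ∈ T1 then B.mu i else 1 - B.mu i))
        ≤ ∏ _i ∈ T0 ∪ T1, (1.21 : ℝ) := by
          refine Finset.prod_le_prod (fun i _ => ?_) hfac
          have := B.sigma_pos i
          have := B.mu_pos i
          have := B.mu_lt_one i
          split <;> linarith
      _ = (1.21 : ℝ) ^ (T0 ∪ T1).card := by rw [Finset.prod_const]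
end
end

section
/- Let D be a chain BN on n+2 variables X_0, X_1, …, X_{n+1} in which every non-root node has the same conditional probability table: μ_{i,0} = μ⁰ and μ_{i,1} = μ¹ for all 1 ≤ i ≤ n+1, with corresponding σ⁰ = √(μ⁰(1−μ⁰)), σ¹ = √(μ¹(1−μ¹)); set D_μ = |μ¹−μ⁰| and D_σ = |σ¹−σ⁰|, and let σ₀ denote the standard deviation of the root X_0. Then the single-literal conjunction f(x) = x_{n+1} satisfies L1(f) ≥ σ₀ · D_μ · (D_μ + D_σ)^n. -/
/-!
A chain BN on `{0,1}^n` is a Bayesian network whose DAG is the directed path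
`1 → 2 → ⋯ → n` (here indexed by `Fin n`, node `0` being the root): node `0` has
no parent and the parent of node `i > 0` is node `i−1`.  `cond i b` is
`P(X_i = 1 | X_{i−1} = b)` (for the root both values coincide and give its
unconditional mean).  The joint distribution is the product of the conditionals,
and the BN-induced Fourier basis is `φ_i(x) = (x_i − μ_{i,x_{i−1}})/σ_{i,x_{i−1}}`,
`φ_S = ∏_{i∈S} φ_i`, with spectral norm `L1(f) = Σ_S |f̂_S|`.
-/

open Finset

noncomputable section

namespace ChainBN

/-- Restriction of a chain on `m+1` nodes to its first `m` nodes. -/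
def init {m : ℕ} (B : ChainBN (m + 1)) : ChainBN m where
  cond i b := B.cond i.castSucc b
  cond_pos i b := B.cond_pos _ _
  cond_lt_one i b := B.cond_lt_one _ _
  root_const h b b' := B.root_const (Nat.succ_pos m) b b'

lemma init_cond {m : ℕ} (B : ChainBN (m + 1)) (i : Fin m) (b : Bool) :
    B.init.cond i b = B.cond i.castSucc b := rfl

lemma init_sigma {m : ℕ} (B : ChainBN (m + 1)) (i : Fin m) (b : Bool) :
    B.init.sigma i b = B.sigma i.castSucc b := rfl

lemma snoc_nat {m : ℕ} (x : Fin (m + 1) → Bool) (b : Bool) (k : ℕ) (h2 : k < m + 2)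
    (hk : k < m + 1) : (Fin.snoc x b : Fin (m + 2) → Bool) ⟨k, h2⟩ = x ⟨k, hk⟩ := by
  rw [show (⟨k, h2⟩ : Fin (m + 2)) = Fin.castSucc ⟨k, hk⟩ from Fin.ext (by simp),
    Fin.snoc_castSucc]

lemma parentVal_snoc_castSucc {m : ℕ} (x : Fin (m + 1) → Bool) (b : Bool) (i : Fin (m + 1)) :
    parentVal (Fin.snoc x b) i.castSucc = parentVal x i := by
  unfold parentVal
  rcases Nat.eq_zero_or_pos i.val with h | h
  · simp [h]
  · have h1 : ¬((i.castSucc : ℕ) = 0) := by simp only [Fin.coe_castSucc]; omega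
    have h2 : ¬((i : ℕ) = 0) := by omega
    rw [if_neg h1, if_neg h2]
    simp only [Fin.coe_castSucc]
    exact snoc_nat x b _ _ (by omega)

lemma parentVal_snoc_last {m : ℕ} (x : Fin (m + 1) → Bool) (b : Bool) :
    parentVal (Fin.snoc x b) (Fin.last (m + 1)) = x (Fin.last m) := by
  unfold parentVal
  rw [if_neg (by simp)]
  rw [snoc_nat x b _ _ (by simp only [Fin.val_last]; omega)]
  exact congrArg x (Fin.ext (by simp))

lemma phi_snoc {m : ℕ} (B : ChainBN (m + 2)) (x : Fin (m + 1) → Bool) (b : Bool)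
    (i : Fin (m + 1)) :
    B.phi i.castSucc (Fin.snoc x b) = B.init.phi i x := by
  unfold phi
  rw [Fin.snoc_castSucc, parentVal_snoc_castSucc]
  rfl

/-- Preimage of a set of indices under `castSucc`. -/
def pre {m : ℕ} (S : Finset (Fin (m + 1))) : Finset (Fin m) :=
  S.preimage Fin.castSucc (Fin.castSucc_injective _).injOn

lemma mem_pre {m : ℕ} (S : Finset (Fin (m + 1))) (i : Fin m) :
    i ∈ pre S ↔ i.castSucc ∈ S := Finset.mem_preimage

lemma image_pre {m : ℕ} (S : Finset (Fin (m + 1))) :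
    (pre S).image Fin.castSucc = S.erase (Fin.last m) := by
  ext i
  simp only [Finset.mem_image, mem_pre, Finset.mem_erase]
  constructor
  · rintro ⟨j, hj, rfl⟩
    exact ⟨Fin.castSucc_lt_last j |>.ne, hj⟩
  · rintro ⟨hne, hi⟩
    obtain ⟨j, rfl⟩ := Fin.exists_castSucc_eq.mpr hne
    exact ⟨j, hi, rfl⟩

lemma phiS_snoc {m : ℕ} (B : ChainBN (m + 2)) (S : Finset (Fin (m + 2)))
    (x : Fin (m + 1) → Bool) (b : Bool) :
    B.phiS S (Fin.snoc x b) =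
      (if Fin.last (m + 1) ∈ S then B.phi (Fin.last (m + 1)) (Fin.snoc x b) else 1) *
        B.init.phiS (pre S) x := by
  unfold phiS
  have herase : ∏ i ∈ S.erase (Fin.last (m + 1)), B.phi i (Fin.snoc x b)
      = ∏ i ∈ pre S, B.init.phi i x := by
    rw [← image_pre, Finset.prod_image (fun i _ j _ h => Fin.castSucc_injective _ h)]
    exact Finset.prod_congr rfl fun i _ => phi_snoc B x b i
  by_cases h : Fin.last (m + 1) ∈ S
  · rw [if_pos h, ← Finset.mul_prod_erase S _ h, herase]
  · rw [if_neg h, one_mul, ← herase, Finset.erase_eq_of_notMem h]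

lemma prob_snoc {m : ℕ} (B : ChainBN (m + 2)) (x : Fin (m + 1) → Bool) (b : Bool) :
    B.prob (Fin.snoc x b) = B.init.prob x *
      (if b then B.cond (Fin.last (m + 1)) (x (Fin.last m))
       else 1 - B.cond (Fin.last (m + 1)) (x (Fin.last m))) := by
  unfold prob
  rw [Fin.prod_univ_castSucc]
  congr 1
  · refine Finset.prod_congr rfl fun i _ => ?_
    rw [Fin.snoc_castSucc, parentVal_snoc_castSucc]
    rfl
  · rw [Fin.snoc_last, parentVal_snoc_last]

lemma sum_snoc {m : ℕ} (g : (Fin (m + 2) → Bool) → ℝ) :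
    ∑ x, g x = ∑ x : Fin (m + 1) → Bool, ∑ b : Bool, g (Fin.snoc x b) := by
  rw [show (∑ x : Fin (m + 1) → Bool, ∑ b : Bool, g (Fin.snoc x b))
      = ∑ p : (Fin (m + 1) → Bool) × Bool, g (Fin.snoc p.1 p.2) from
    (Fintype.sum_prod_type
      (f := fun p : (Fin (m + 1) → Bool) × Bool => g (Fin.snoc p.1 p.2))).symm]
  exact Fintype.sum_equiv ((Fin.snocEquiv (fun _ => Bool)).symm.trans (Equiv.prodComm _ _)) _ _
    (fun y => by simp [Fin.snocEquiv, Equiv.prodComm, Fin.snoc_init_self])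

/-- Backward-marginalization value of `E[(α + β·x_last)·φ_S]`. -/
def val : ∀ {m : ℕ}, ChainBN (m + 1) → Finset (Fin (m + 1)) → ℝ → ℝ → ℝ
  | 0, B, S, α, β =>
      if (0 : Fin 1) ∈ S then β * B.sigma 0 false else α + β * B.cond 0 false
  | (m + 1), B, S, α, β =>
      if Fin.last (m + 1) ∈ S then
        val B.init (pre S) (β * B.sigma (Fin.last (m + 1)) false)
          (β * (B.sigma (Fin.last (m + 1)) true - B.sigma (Fin.last (m + 1)) false))
      else
        val B.init (pre S) (α + β * B.cond (Fin.last (m + 1)) false)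
          (β * (B.cond (Fin.last (m + 1)) true - B.cond (Fin.last (m + 1)) false))

lemma val_zero (B : ChainBN (0 + 1)) (S : Finset (Fin (0 + 1))) (α β : ℝ) :
    val B S α β = if (0 : Fin 1) ∈ S then β * B.sigma 0 false
      else α + β * B.cond 0 false := rfl

lemma val_succ {m : ℕ} (B : ChainBN (m + 1 + 1)) (S : Finset (Fin (m + 1 + 1))) (α β : ℝ) :
    val B S α β =
      if Fin.last (m + 1) ∈ S then
        val B.init (pre S) (β * B.sigma (Fin.last (m + 1)) false)
          (β * (B.sigma (Fin.last (m + 1)) true - B.sigma (Fin.last (m + 1)) false))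
      else
        val B.init (pre S) (α + β * B.cond (Fin.last (m + 1)) false)
          (β * (B.cond (Fin.last (m + 1)) true - B.cond (Fin.last (m + 1)) false)) := rfl

lemma single_site_plain (μ α β : ℝ) :
    ∑ b : Bool, (if b then μ else 1 - μ) * (α + β * b2r b) = α + β * μ := by
  rw [Fintype.sum_bool]
  simp [b2r]
  ring

lemma single_site_phi (μ α β : ℝ) (h0 : 0 < μ) (h1 : μ < 1) :
    ∑ b : Bool, (if b then μ else 1 - μ) *
        ((α + β * b2r b) * ((b2r b - μ) / Real.sqrt (μ * (1 - μ))))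
      = β * Real.sqrt (μ * (1 - μ)) := by
  have hpos : 0 < μ * (1 - μ) := by nlinarith
  have hs : Real.sqrt (μ * (1 - μ)) * Real.sqrt (μ * (1 - μ)) = μ * (1 - μ) :=
    Real.mul_self_sqrt hpos.le
  have hsne : Real.sqrt (μ * (1 - μ)) ≠ 0 := by positivity
  rw [Fintype.sum_bool,
    show (if (true : Bool) then μ else 1 - μ) = μ from rfl,
    show (if (false : Bool) then μ else 1 - μ) = 1 - μ from rfl,
    show b2r true = 1 from rfl, show b2r false = 0 from rfl]
  have key : μ * ((α + β * 1) * ((1 - μ) / Real.sqrt (μ * (1 - μ)))) +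
      (1 - μ) * ((α + β * 0) * ((0 - μ) / Real.sqrt (μ * (1 - μ))))
      = (β * (Real.sqrt (μ * (1 - μ)) * Real.sqrt (μ * (1 - μ)))) / Real.sqrt (μ * (1 - μ)) := by
    rw [hs]
    ring
  rw [key, mul_div_assoc, mul_div_assoc, div_self hsne, mul_one]

lemma expect_affine : ∀ (m : ℕ) (B : ChainBN (m + 1)) (S : Finset (Fin (m + 1))) (α β : ℝ),
    B.expect (fun x => (α + β * b2r (x (Fin.last m))) * B.phiS S x) = val B S α β := by
  intro m
  induction m with
  | zero =>
    intro B S α β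
    unfold expect
    rw [show (∑ x : Fin 1 → Bool, B.prob x * ((α + β * b2r (x (Fin.last 0))) * B.phiS S x))
        = ∑ b : Bool, B.prob (fun _ => b) *
            ((α + β * b2r b) * B.phiS S (fun _ => b)) from
      (Fintype.sum_equiv (Equiv.funUnique (Fin 1) Bool).symm _ _ fun b => rfl).symm]
    have hprob : ∀ b : Bool, B.prob (fun _ => b)
        = if b then B.cond 0 false else 1 - B.cond 0 false := by
      intro b
      unfold prob
      rw [Fin.prod_univ_one]
      rfl
    have hall : ∀ i : Fin (0 + 1), i = 0 := fun i => Fin.ext (by omega)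
    by_cases h : (0 : Fin 1) ∈ S
    · have hS : S = {0} := by
        ext i
        rw [hall i]
        simp [h]
      subst hS
      rw [val_zero, if_pos h]
      have : ∀ b : Bool, B.phiS {0} (fun _ => b)
          = (b2r b - B.cond 0 false) / Real.sqrt (B.cond 0 false * (1 - B.cond 0 false)) := by
        intro b
        unfold phiS phi sigma parentVal
        simp
      calc ∑ b : Bool, B.prob (fun _ => b) * ((α + β * b2r b) * B.phiS {0} (fun _ => b))
          = ∑ b : Bool, (if b then B.cond 0 false else 1 - B.cond 0 false) *
              ((α + β * b2r b) * ((b2r b - B.cond 0 false) /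
                Real.sqrt (B.cond 0 false * (1 - B.cond 0 false)))) := by
            refine Finset.sum_congr rfl fun b _ => by rw [hprob, this]
        _ = β * Real.sqrt (B.cond 0 false * (1 - B.cond 0 false)) :=
            single_site_phi _ _ _ (B.cond_pos 0 false) (B.cond_lt_one 0 false)
        _ = β * B.sigma 0 false := rfl
    · have hS : S = ∅ := by
        ext i
        rw [hall i]
        simp [h]
      subst hS
      rw [val_zero, if_neg h]
      calc ∑ b : Bool, B.prob (fun _ => b) * ((α + β * b2r b) * B.phiS ∅ (fun _ => b))
          = ∑ b : Bool, (if b then B.cond 0 false else 1 - B.cond 0 false) *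
              (α + β * b2r b) := by
            refine Finset.sum_congr rfl fun b _ => by
              rw [hprob]; unfold phiS; rw [Finset.prod_empty, mul_one]
        _ = α + β * B.cond 0 false := single_site_plain _ _ _
  | succ m ih =>
    intro B S α β
    unfold expect
    rw [sum_snoc]
    have key : ∀ x : Fin (m + 1) → Bool,
        (∑ b : Bool, B.prob (Fin.snoc x b) *
          ((α + β * b2r ((Fin.snoc x b : Fin (m + 2) → Bool) (Fin.last (m + 1)))) * B.phiS S (Fin.snoc x b)))
        = B.init.prob x *
          ((if Fin.last (m + 1) ∈ S then
              (β * B.sigma (Fin.last (m + 1)) false) +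
                (β * (B.sigma (Fin.last (m + 1)) true - B.sigma (Fin.last (m + 1)) false)) *
                  b2r (x (Fin.last m))
            else
              (α + β * B.cond (Fin.last (m + 1)) false) +
                (β * (B.cond (Fin.last (m + 1)) true - B.cond (Fin.last (m + 1)) false)) *
                  b2r (x (Fin.last m))) * B.init.phiS (pre S) x) := by
      intro x
      by_cases h : Fin.last (m + 1) ∈ S
      · have : ∀ b : Bool, B.prob (Fin.snoc x b) *
            ((α + β * b2r ((Fin.snoc x b : Fin (m + 2) → Bool) (Fin.last (m + 1)))) * B.phiS S (Fin.snoc x b))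
            = B.init.prob x * B.init.phiS (pre S) x *
              ((if b then B.cond (Fin.last (m + 1)) (x (Fin.last m))
                else 1 - B.cond (Fin.last (m + 1)) (x (Fin.last m))) *
               ((α + β * b2r b) *
                ((b2r b - B.cond (Fin.last (m + 1)) (x (Fin.last m))) /
                  Real.sqrt (B.cond (Fin.last (m + 1)) (x (Fin.last m)) *
                    (1 - B.cond (Fin.last (m + 1)) (x (Fin.last m))))))) := by
          intro b
          rw [prob_snoc, phiS_snoc, if_pos h, Fin.snoc_last]
          unfold phi sigma
          rw [Fin.snoc_last, parentVal_snoc_last]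
          ring
        rw [Finset.sum_congr rfl fun b _ => this b, ← Finset.mul_sum,
          single_site_phi _ _ _ (B.cond_pos _ _) (B.cond_lt_one _ _), if_pos h]
        have : Real.sqrt (B.cond (Fin.last (m + 1)) (x (Fin.last m)) *
            (1 - B.cond (Fin.last (m + 1)) (x (Fin.last m))))
            = B.sigma (Fin.last (m + 1)) (x (Fin.last m)) := rfl
        rw [this]
        cases hx : x (Fin.last m) <;> simp [b2r] <;> ring
      · have : ∀ b : Bool, B.prob (Fin.snoc x b) *
            ((α + β * b2r ((Fin.snoc x b : Fin (m + 2) → Bool) (Fin.last (m + 1)))) * B.phiS S (Fin.snoc x b))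
            = B.init.prob x * B.init.phiS (pre S) x *
              ((if b then B.cond (Fin.last (m + 1)) (x (Fin.last m))
                else 1 - B.cond (Fin.last (m + 1)) (x (Fin.last m))) *
               (α + β * b2r b)) := by
          intro b
          rw [prob_snoc, phiS_snoc, if_neg h, Fin.snoc_last]
          ring
        rw [Finset.sum_congr rfl fun b _ => this b, ← Finset.mul_sum,
          single_site_plain, if_neg h]
        cases hx : x (Fin.last m) <;> simp [b2r] <;> ring
    rw [Finset.sum_congr rfl fun x _ => key x]
    by_cases h : Fin.last (m + 1) ∈ S
    · simp only [if_pos h]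
      rw [show val B S α β = val B.init (pre S) (β * B.sigma (Fin.last (m + 1)) false)
          (β * (B.sigma (Fin.last (m + 1)) true - B.sigma (Fin.last (m + 1)) false)) by
        rw [val_succ, if_pos h]]
      exact ih B.init (pre S) _ _
    · simp only [if_neg h]
      rw [show val B S α β = val B.init (pre S) (α + β * B.cond (Fin.last (m + 1)) false)
          (β * (B.cond (Fin.last (m + 1)) true - B.cond (Fin.last (m + 1)) false)) by
        rw [val_succ, if_neg h]]
      exact ih B.init (pre S) _ _

lemma val_closed : ∀ (m : ℕ) (B : ChainBN (m + 1)) (S : Finset (Fin (m + 1))),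
    (0 : Fin (m + 1)) ∈ S → ∀ α β : ℝ,
    val B S α β = β * B.sigma 0 false *
      ∏ i : Fin (m + 1), (if (i : ℕ) = 0 then 1
        else if i ∈ S then B.sigma i true - B.sigma i false
        else B.cond i true - B.cond i false) := by
  intro m
  induction m with
  | zero =>
    intro B S h0 α β
    rw [Fin.prod_univ_one, val_zero, if_pos h0]
    norm_num
  | succ m ih =>
    intro B S h0 α β
    have h0' : (0 : Fin (m + 1)) ∈ pre S := by
      rw [mem_pre, Fin.castSucc_zero]
      exact h0
    have hlast : ((Fin.last (m + 1) : Fin (m + 2)) : ℕ) = m + 1 := rfl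
    have hprod : ∀ i : Fin (m + 1),
        (if ((i.castSucc : Fin (m + 2)) : ℕ) = 0 then 1
          else if i.castSucc ∈ S then B.sigma i.castSucc true - B.sigma i.castSucc false
          else B.cond i.castSucc true - B.cond i.castSucc false)
        = (if (i : ℕ) = 0 then 1
          else if i ∈ pre S then B.init.sigma i true - B.init.sigma i false
          else B.init.cond i true - B.init.cond i false) := by
      intro i
      simp only [init_sigma, init_cond, mem_pre, Fin.coe_castSucc]
    have hPP : (∏ i : Fin (m + 2), (if (i : ℕ) = 0 then (1 : ℝ)
          else if i ∈ S then B.sigma i true - B.sigma i false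
          else B.cond i true - B.cond i false))
        = (∏ i : Fin (m + 1), (if (i : ℕ) = 0 then (1 : ℝ)
            else if i ∈ pre S then B.init.sigma i true - B.init.sigma i false
            else B.init.cond i true - B.init.cond i false)) *
          (if ((Fin.last (m + 1) : Fin (m + 2)) : ℕ) = 0 then (1 : ℝ)
            else if Fin.last (m + 1) ∈ S
            then B.sigma (Fin.last (m + 1)) true - B.sigma (Fin.last (m + 1)) false
            else B.cond (Fin.last (m + 1)) true - B.cond (Fin.last (m + 1)) false) := by
      rw [Fin.prod_univ_castSucc]
      exact congrArg₂ (· * ·) (Finset.prod_congr rfl fun i _ => hprod i) rfl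
    rw [hPP]
    by_cases h : Fin.last (m + 1) ∈ S
    · rw [show val B S α β = val B.init (pre S) (β * B.sigma (Fin.last (m + 1)) false)
          (β * (B.sigma (Fin.last (m + 1)) true - B.sigma (Fin.last (m + 1)) false)) by
        rw [val_succ, if_pos h]]
      rw [ih B.init (pre S) h0', init_sigma, Fin.castSucc_zero,
        if_neg (by rw [hlast]; omega), if_pos h]
      ring
    · rw [show val B S α β = val B.init (pre S) (α + β * B.cond (Fin.last (m + 1)) false)
          (β * (B.cond (Fin.last (m + 1)) true - B.cond (Fin.last (m + 1)) false)) by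
        rw [val_succ, if_neg h]]
      rw [ih B.init (pre S) h0', init_sigma, Fin.castSucc_zero,
        if_neg (by rw [hlast]; omega), if_neg h]
      ring

lemma coeff_last (m : ℕ) (B : ChainBN (m + 1)) (S : Finset (Fin (m + 1)))
    (h0 : (0 : Fin (m + 1)) ∈ S) :
    B.coeff (fun x => b2r (x (Fin.last m))) S = B.sigma 0 false *
      ∏ i : Fin (m + 1), (if (i : ℕ) = 0 then 1
        else if i ∈ S then B.sigma i true - B.sigma i false
        else B.cond i true - B.cond i false) := by
  have : B.coeff (fun x => b2r (x (Fin.last m))) S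
      = B.expect (fun x => ((0 : ℝ) + 1 * b2r (x (Fin.last m))) * B.phiS S x) := by
    unfold coeff expect
    exact Finset.sum_congr rfl fun x _ => by ring
  rw [this, expect_affine, val_closed m B S h0, one_mul]

end ChainBN

set_option maxHeartbeats 1000000 in
/-- lower bound for chains. For a chain BN on `n+2` variables
`X_0, …, X_{n+1}` in which all non-root nodes share the same conditional table
(`μ_{i,0} = μ⁰`, `μ_{i,1} = μ¹`), the single literal `f(x) = x_{n+1}` satisfies
`L1(f) ≥ σ₀ · D_μ · (D_μ + D_σ)^n` where `D_μ = |μ¹ − μ⁰|`,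
`D_σ = |σ¹ − σ⁰|` and `σ₀` is the standard deviation of the root. -/
theorem chain_L1_lower_bound (n : ℕ) (B : ChainBN (n + 2)) (μ0 μ1 : ℝ)
    (hμ : ∀ i : Fin (n + 2), (i : ℕ) ≠ 0 → B.cond i false = μ0 ∧ B.cond i true = μ1) :
    B.sigma 0 false * |μ1 - μ0| *
        (|μ1 - μ0| + |Real.sqrt (μ1 * (1 - μ1)) - Real.sqrt (μ0 * (1 - μ0))|) ^ n
      ≤ B.L1 (fun x => b2r (x (Fin.last (n + 1)))) := by
  classical
  set A := μ1 - μ0 with hA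
  set Dσ := Real.sqrt (μ1 * (1 - μ1)) - Real.sqrt (μ0 * (1 - μ0)) with hDσ
  have hσ0nn : 0 ≤ B.sigma 0 false := Real.sqrt_nonneg _
  set U : Finset (Fin (n + 2)) :=
    Finset.univ.filter (fun i => (i : ℕ) ≠ 0 ∧ i ≠ Fin.last (n + 1)) with hU
  have hlastval : ((Fin.last (n + 1) : Fin (n + 2)) : ℕ) = n + 1 := rfl
  have h00 : ((0 : Fin (n + 2)) : ℕ) = 0 := rfl
  have hne : (0 : Fin (n + 2)) ≠ Fin.last (n + 1) := by
    rw [Fin.ne_iff_vne, hlastval, h00]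
    omega
  have h0U : (0 : Fin (n + 2)) ∉ U := by simp [hU]
  have hlastU : Fin.last (n + 1) ∉ U := by simp [hU]
  have hUeq : U = Finset.univ \ {0, Fin.last (n + 1)} := by
    ext i
    simp only [hU, Finset.mem_filter, Finset.mem_univ, true_and, Finset.mem_sdiff,
      Finset.mem_insert, Finset.mem_singleton, not_or]
    constructor
    · rintro ⟨h1, h2⟩
      exact ⟨fun h => h1 (by rw [h]; rfl), h2⟩
    · rintro ⟨h1, h2⟩
      refine ⟨fun h => h1 (Fin.ext h), h2⟩
  have hcard : U.card = n := by
    rw [hUeq, Finset.card_sdiff_of_subset (Finset.subset_univ _), Finset.card_univ, Fintype.card_fin,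
      Finset.card_pair hne]
    omega
  have hcoeff : ∀ T ∈ U.powerset,
      |B.coeff (fun x => b2r (x (Fin.last (n + 1)))) (insert 0 T)|
        = B.sigma 0 false * |A| * ∏ i ∈ U, (if i ∈ T then |Dσ| else |A|) := by
    intro T hT
    rw [Finset.mem_powerset] at hT
    have h0T : (0 : Fin (n + 2)) ∉ T := fun h => h0U (hT h)
    have hlastT : Fin.last (n + 1) ∉ T := fun h => hlastU (hT h)
    rw [ChainBN.coeff_last _ _ _ (Finset.mem_insert_self 0 T)]
    have hprod : ∏ i : Fin (n + 2), (if (i : ℕ) = 0 then 1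
        else if i ∈ insert 0 T then B.sigma i true - B.sigma i false
        else B.cond i true - B.cond i false)
        = (∏ i ∈ U, (if i ∈ T then Dσ else A)) * (1 * A) := by
      rw [show (Finset.univ : Finset (Fin (n + 2)))
          = Finset.univ from rfl, ← Finset.prod_sdiff
          (Finset.subset_univ ({0, Fin.last (n + 1)} : Finset (Fin (n + 2)))), ← hUeq]
      congr 1
      · refine Finset.prod_congr rfl fun i hi => ?_
        rw [hUeq, Finset.mem_sdiff, Finset.mem_insert, Finset.mem_singleton, not_or] at hi
        have hi0 : (i : ℕ) ≠ 0 := fun h => hi.2.1 (Fin.ext h)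
        have hiU : i ∈ U := by rw [hUeq]; simp [hi.2.1, hi.2.2]
        rw [if_neg hi0]
        obtain ⟨hF, hT1⟩ := hμ i hi0
        by_cases hiT : i ∈ T
        · rw [if_pos (Finset.mem_insert_of_mem hiT), if_pos hiT]
          unfold ChainBN.sigma
          rw [hF, hT1]
        · have : i ∉ insert 0 T := by
            simp only [Finset.mem_insert, not_or]
            exact ⟨fun h => hi0 (by rw [h]; rfl), hiT⟩
          rw [if_neg this, if_neg hiT, hF, hT1]
      · rw [Finset.prod_pair hne]
        have hg0 : (if ((0 : Fin (n + 2)) : ℕ) = 0 then (1 : ℝ)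
            else if (0 : Fin (n + 2)) ∈ insert 0 T then B.sigma 0 true - B.sigma 0 false
            else B.cond 0 true - B.cond 0 false) = 1 := if_pos rfl
        have hlne : Fin.last (n + 1) ∉ insert (0 : Fin (n + 2)) T := by
          simp only [Finset.mem_insert, not_or]
          exact ⟨hne.symm, hlastT⟩
        have hgl : (if ((Fin.last (n + 1) : Fin (n + 2)) : ℕ) = 0 then (1 : ℝ)
            else if Fin.last (n + 1) ∈ insert 0 T
            then B.sigma (Fin.last (n + 1)) true - B.sigma (Fin.last (n + 1)) false
            else B.cond (Fin.last (n + 1)) true - B.cond (Fin.last (n + 1)) false) = A := by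
          rw [if_neg (by rw [hlastval]; omega), if_neg hlne,
            (hμ (Fin.last (n + 1)) (by rw [hlastval]; omega)).1,
            (hμ (Fin.last (n + 1)) (by rw [hlastval]; omega)).2]
        rw [hg0, hgl]
    rw [hprod, abs_mul, abs_mul, abs_mul, abs_of_nonneg hσ0nn, abs_one, Finset.abs_prod]
    rw [Finset.prod_congr rfl fun i _ => apply_ite abs _ _ _]
    ring
  have hsplit : ∀ T ∈ U.powerset, ∏ i ∈ U, (if i ∈ T then |Dσ| else |A|)
      = (∏ i ∈ T, |Dσ|) * ∏ i ∈ U \ T, |A| := by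
    intro T hT
    rw [Finset.mem_powerset] at hT
    rw [← Finset.prod_sdiff hT, mul_comm]
    congr 1
    · exact Finset.prod_congr rfl fun i hi => if_pos hi
    · exact Finset.prod_congr rfl fun i hi => if_neg (Finset.mem_sdiff.mp hi).2
  have hsum : ∑ T ∈ U.powerset, ∏ i ∈ U, (if i ∈ T then |Dσ| else |A|)
      = (|A| + |Dσ|) ^ n := by
    rw [Finset.sum_congr rfl hsplit, ← Finset.prod_add, Finset.prod_const, hcard, add_comm]
  have hinj : ∀ T ∈ U.powerset, ∀ T' ∈ U.powerset,
      insert (0 : Fin (n + 2)) T = insert 0 T' → T = T' := by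
    intro T hT T' hT' h
    rw [Finset.mem_powerset] at hT hT'
    have h0T : (0 : Fin (n + 2)) ∉ T := fun hh => h0U (hT hh)
    have h0T' : (0 : Fin (n + 2)) ∉ T' := fun hh => h0U (hT' hh)
    rw [← Finset.erase_insert h0T, ← Finset.erase_insert h0T', h]
  have step1 : B.sigma 0 false * |A| * (|A| + |Dσ|) ^ n
      = ∑ T ∈ U.powerset,
          |B.coeff (fun x => b2r (x (Fin.last (n + 1)))) (insert 0 T)| := by
    rw [Finset.sum_congr rfl hcoeff, ← Finset.mul_sum, hsum]
  have step2 : (∑ T ∈ U.powerset,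
          |B.coeff (fun x => b2r (x (Fin.last (n + 1)))) (insert 0 T)|)
      = ∑ S ∈ U.powerset.image (insert 0),
          |B.coeff (fun x => b2r (x (Fin.last (n + 1)))) S| :=
    (Finset.sum_image (f := fun S => |B.coeff (fun x => b2r (x (Fin.last (n + 1)))) S|) hinj).symm
  have step3 : (∑ S ∈ U.powerset.image (insert 0),
          |B.coeff (fun x => b2r (x (Fin.last (n + 1)))) S|)
      ≤ B.L1 (fun x => b2r (x (Fin.last (n + 1)))) :=
    Finset.sum_le_sum_of_subset_of_nonneg (Finset.subset_univ _)
      (fun _ _ _ => abs_nonneg _)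
  rw [step1, step2]
  exact step3
end
end
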